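/- arXiv:0812.1938 — 5 statements merged into one kernel-verified Lean document; each statement's English description precedes it below -/
import Mathlib

section
/- Let $G$ be a topologically ordered directed acyclic graph on $[m]$, $\Lambda = I - L$ with $L$ the upper-triangular matrix of edge parameters $\lambda_{ij}$, and $\Phi = \mathrm{diag}(\phi_1,\dots,\phi_m)$. Define $\Sigma = \Lambda^{-\top}\Phi\Lambda^{-1}$. Then for all $i,j \in [m]$, $\sigma_{ij} = \sum_{(P_1,P_2) \in \mathcal{T}(i,j)} \phi_{\mathrm{top}(P_1,P_2)}\, \lambda^{P_1}\lambda^{P_2}$, where $\mathcal{T}(i,j)$ is the set of treks from $i$ to $j$ in $G$ (the trek rule). -/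
/-!
Let `P` be the matrix of path sums, `P a b = ∑ λ^p` over the directed paths `p` from `a` to `b`;
the topological order makes every such sum finite. Splitting off the first edge of a path gives
`P = I + L P`, so `Λ⁻¹ = (I - L)⁻¹ = P` and `σ_ij = ∑_k P_ki φ_k P_kj`. A trek with top `k` is
exactly a pair of paths out of `k`, so grouping the treks by their top gives the same sum.
-/

open Matrix MvPolynomial

/-- A directed path, as the list of its vertices, from `i` to `j`. -/
def IsPath {V : Type*} (E : V → V → Prop) (p : List V) (i j : V) : Prop :=
  p.head? = some i ∧ p.getLast? = some j ∧ p.Chain' E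

/-- The path monomial: product of edge weights along a path. -/
noncomputable def pathMonomial {V : Type*} {R : Type*} [CommRing R]
    (w : V × V → R) (p : List V) : R :=
  ((p.zip p.tail).map w).prod

/-- A trek from `i` to `j`: an ordered pair of directed paths with a common source
(the top), the first ending at `i` and the second ending at `j`. -/
def IsTrek {V : Type*} (E : V → V → Prop) (P₁ P₂ : List V) (i j : V) : Prop :=
  ∃ k, IsPath E P₁ k i ∧ IsPath E P₂ k j

/-- `Λ = I - L`, with `L` the matrix of edge indeterminates of the graph, over the
polynomial ring with a variable `λ_e` for each edge `e` and `φ_v` for each vertex. -/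
noncomputable def LamMat (m : ℕ) (E : Fin m → Fin m → Prop) [DecidableRel E] :
    Matrix (Fin m) (Fin m) (MvPolynomial ((Fin m × Fin m) ⊕ Fin m) ℝ) :=
  1 - Matrix.of (fun a b => if E a b then X (Sum.inl (a, b)) else 0)

/-- The generic covariance matrix `Σ = Λ⁻ᵀ Φ Λ⁻¹` of the DAG. -/
noncomputable def SigMat (m : ℕ) (E : Fin m → Fin m → Prop) [DecidableRel E] :
    Matrix (Fin m) (Fin m) (MvPolynomial ((Fin m × Fin m) ⊕ Fin m) ℝ) :=
  ((LamMat m E)⁻¹)ᵀ * Matrix.diagonal (fun v => X (Sum.inr v)) * (LamMat m E)⁻¹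

section Paths

variable {V : Type*} {E : V → V → Prop}

lemma IsPath.head?_eq {p : List V} {a b : V} (hp : IsPath E p a b) : p.head? = some a := hp.1

lemma isPath_cons_iff {x a b : V} {q : List V} :
    IsPath E (x :: q) a b ↔ a = x ∧ (q = [] ∧ b = x ∨ ∃ c, E x c ∧ IsPath E q c b) := by
  cases q with
  | nil => simp [IsPath, List.Chain', eq_comm]
  | cons y r =>
    simp only [IsPath, List.Chain', List.head?_cons, Option.some.injEq, List.getLast?_cons_cons,
      List.isChain_cons_cons, reduceCtorEq, false_and, false_or]
    constructor
    · rintro ⟨rfl, hb, hxy, hr⟩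
      exact ⟨rfl, y, hxy, rfl, hb, hr⟩
    · rintro ⟨rfl, c, hxc, rfl, hb, hr⟩
      exact ⟨rfl, hb, hxc, hr⟩

lemma IsPath.length_le_card [Preorder V] [Fintype V] (hE : ∀ a b, E a b → a < b)
    {p : List V} {a b : V} (hp : IsPath E p a b) : p.length ≤ Fintype.card V := by
  have hlt : p.IsChain (· < ·) := hp.2.2.imp hE
  have hnodup : p.Nodup := (List.isChain_iff_pairwise.mp hlt).imp ne_of_lt
  exact hnodup.length_le_card

lemma finite_setOf_isPath [Preorder V] [Fintype V] (hE : ∀ a b, E a b → a < b) (a b : V) :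
    {p | IsPath E p a b}.Finite :=
  (List.finite_length_le V _).subset fun _ hp => hp.length_le_card hE

end Paths

lemma finsum_mem_prod_mul {α β R : Type*} [NonUnitalNonAssocSemiring R] {s : Set α} {t : Set β}
    (hs : s.Finite) (ht : t.Finite) (f : α → R) (g : β → R) :
    ∑ᶠ x ∈ s ×ˢ t, f x.1 * g x.2 = (∑ᶠ a ∈ s, f a) * ∑ᶠ b ∈ t, g b := by
  lift s to Finset α using hs
  lift t to Finset β using ht
  rw [← Finset.coe_product, finsum_mem_coe_finset, finsum_mem_coe_finset, finsum_mem_coe_finset,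
    Finset.sum_mul_sum, Finset.sum_product]

section PathSum

variable {V R : Type*} [CommRing R] (E : V → V → Prop) (w : V × V → R)

noncomputable def pathSum (a b : V) : R := ∑ᶠ p ∈ {p | IsPath E p a b}, pathMonomial w p

def weightedAdj [DecidableRel E] : Matrix V V R := of fun a b => if E a b then w (a, b) else 0

variable {E w}

lemma pathMonomial_singleton (a : V) : pathMonomial w [a] = 1 := by
  simp [pathMonomial]

lemma pathMonomial_cons {a c : V} {q : List V} (hq : q.head? = some c) :
    pathMonomial w (a :: q) = w (a, c) * pathMonomial w q := by
  obtain ⟨r, rfl⟩ : ∃ r, q = c :: r := ⟨q.tail, List.eq_cons_of_mem_head? hq⟩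
  simp [pathMonomial]

lemma setOf_isPath_eq_union (a b : V) :
    {p | IsPath E p a b} = {p | p = [a] ∧ a = b} ∪
      ⋃ c ∈ {c | E a c}, List.cons a '' {q | IsPath E q c b} := by
  ext (_ | ⟨x, q⟩)
  · simp [IsPath]
  · simp only [Set.mem_ofPred_eq, isPath_cons_iff, Set.mem_union, Set.mem_iUnion, Set.mem_image,
      List.cons.injEq, exists_prop]
    aesop

variable [Preorder V] [Fintype V]

lemma finsum_treks_eq_sum_top (hE : ∀ a b, E a b → a < b) (φ : V → R) (i j : V) :
    ∑ᶠ t : {t : List V × List V // IsTrek E t.1 t.2 i j},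
        φ (t.1.1.head?.getD i) * pathMonomial w t.1.1 * pathMonomial w t.1.2
      = ∑ k, φ k * pathSum E w k i * pathSum E w k j := by
  have hfin := finite_setOf_isPath hE (E := E)
  have htreks : {t : List V × List V | IsTrek E t.1 t.2 i j}
      = ⋃ k, {p | IsPath E p k i} ×ˢ {p | IsPath E p k j} := by
    ext t
    simp [IsTrek]
  have hdisj : Pairwise
      (Function.onFun Disjoint fun k => {p | IsPath E p k i} ×ˢ {p | IsPath E p k j}) :=
    fun k k' hkk' => Set.disjoint_left.mpr fun t ht ht' =>
      hkk' (Option.some_injective _ (ht.1.head?_eq.symm.trans ht'.1.head?_eq))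
  refine (finsum_set_coe_eq_finsum_mem {t : List V × List V | IsTrek E t.1 t.2 i j}
    (f := fun t => φ (t.1.head?.getD i) * pathMonomial w t.1 * pathMonomial w t.2)).trans ?_
  rw [htreks, finsum_mem_iUnion hdisj fun k => (hfin k i).prod (hfin k j),
    finsum_eq_sum_of_fintype]
  refine Finset.sum_congr rfl fun k _ => ?_
  calc ∑ᶠ t ∈ {p | IsPath E p k i} ×ˢ {p | IsPath E p k j},
        φ (t.1.head?.getD i) * pathMonomial w t.1 * pathMonomial w t.2
      = φ k * ∑ᶠ t ∈ {p | IsPath E p k i} ×ˢ {p | IsPath E p k j},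
          pathMonomial w t.1 * pathMonomial w t.2 := by
        rw [mul_finsum_mem' _ _ ((hfin k i).prod (hfin k j))]
        refine finsum_mem_congr rfl fun t ht => ?_
        rw [ht.1.head?_eq, Option.getD_some, mul_assoc]
    _ = φ k * pathSum E w k i * pathSum E w k j := by
        rw [finsum_mem_prod_mul (hfin k i) (hfin k j), mul_assoc, pathSum, pathSum]

variable [DecidableEq V] [DecidableRel E]

lemma pathSum_eq_ite_add_sum (hE : ∀ a b, E a b → a < b) (a b : V) :
    pathSum E w a b = (if a = b then 1 else 0) + ∑ c, weightedAdj E w a c * pathSum E w c b := by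
  have hfin := finite_setOf_isPath hE (E := E)
  have hdisj : Disjoint {p | p = [a] ∧ a = b}
      (⋃ c ∈ {c | E a c}, List.cons a '' {q | IsPath E q c b}) := by
    refine Set.disjoint_left.mpr fun p ⟨hpa, _⟩ hp => ?_
    obtain ⟨c, -, q, hq, rfl⟩ := by simpa only [Set.mem_iUnion, exists_prop] using hp
    obtain rfl : q = [] := (List.cons.inj hpa).2
    simpa using hq.head?_eq
  have hpairwise : Set.PairwiseDisjoint {c | E a c}
      fun c => List.cons a '' {q | IsPath E q c b} := by
    refine fun c _ c' _ hcc' => Set.disjoint_left.mpr ?_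
    rintro _ ⟨q, hq, rfl⟩ ⟨q', hq', hqq'⟩
    obtain rfl := List.cons_injective hqq'
    exact hcc' (Option.some_injective _ (hq.head?_eq.symm.trans hq'.head?_eq))
  rw [pathSum, setOf_isPath_eq_union, finsum_mem_union hdisj ?finSingle ?finUnion,
    finsum_mem_biUnion hpairwise (Set.toFinite _) fun c _ => (hfin c b).image _]
  case finSingle => exact (Set.finite_singleton [a]).subset fun p hp => hp.1
  case finUnion => exact Set.Finite.biUnion (Set.toFinite _) fun c _ => (hfin c b).image _
  congr 1
  · split_ifs with hab
    · simp [hab, pathMonomial_singleton]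
    · simp [hab]
  · rw [finsum_mem_def, finsum_eq_sum_of_fintype]
    refine Finset.sum_congr rfl fun c _ => ?_
    rw [Set.indicator_apply, weightedAdj, of_apply]
    by_cases hac : E a c
    · rw [if_pos (show c ∈ {c | E a c} from hac), if_pos hac,
        finsum_mem_image List.cons_injective.injOn, pathSum,
        mul_finsum_mem' _ _ (hfin c b)]
      exact finsum_mem_congr rfl fun q hq => pathMonomial_cons hq.head?_eq
    · rw [if_neg (show c ∉ {c | E a c} from hac), if_neg hac, zero_mul]

lemma inv_one_sub_weightedAdj (hE : ∀ a b, E a b → a < b) :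
    (1 - weightedAdj E w)⁻¹ = of (pathSum E w) := by
  refine inv_eq_right_inv (ext fun a b => ?_)
  rw [sub_mul, one_mul, Matrix.sub_apply, mul_apply, of_apply, pathSum_eq_ite_add_sum hE a b,
    one_apply]
  simp only [of_apply, add_sub_cancel_right]

end PathSum

/-- **The trek rule.** For a topologically ordered DAG `G` on `[m]`, with
`Λ = I - L` (edge indeterminates `λ`) and `Φ = diag(φ₁,…,φ_m)`, the entries of
`Σ = Λ⁻ᵀ Φ Λ⁻¹` satisfy `σ_{ij} = ∑_{(P₁,P₂) ∈ 𝒯(i,j)} φ_top λ^{P₁} λ^{P₂}`. -/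
theorem stmt1 (m : ℕ) (E : Fin m → Fin m → Prop) [DecidableRel E]
    (hE : ∀ i j : Fin m, E i j → i < j) (i j : Fin m) :
    SigMat m E i j
    = ∑ᶠ t : {t : List (Fin m) × List (Fin m) // IsTrek E t.1 t.2 i j},
        X (Sum.inr (t.1.1.head?.getD i))
          * pathMonomial (fun e => X (Sum.inl e)) t.1.1
          * pathMonomial (fun e => X (Sum.inl e)) t.1.2 := by
  have hLam : LamMat m E = 1 - weightedAdj E fun e => X (Sum.inl e) := rfl
  rw [finsum_treks_eq_sum_top hE (fun v => X (Sum.inr v)), SigMat, hLam,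
    inv_one_sub_weightedAdj hE, mul_apply]
  simp only [mul_diagonal, transpose_apply, of_apply]
  exact Finset.sum_congr rfl fun k _ => by ring
end

section
/- Let $X \sim \mathcal{N}(\mu, \Sigma)$ be a multivariate normal random vector with positive definite covariance $\Sigma$, and let $A$, $B$, $C$ be disjoint subsets of the index set $[m]$. Then the conditional independence statement $X_A \perp\!\!\!\perp X_B \mid X_C$ holds if and only if the submatrix $\Sigma_{A\cup C,\, B\cup C}$ has rank exactly $\#C$. -/
/-!
After reordering rows and columns, `Σ_{A∪C, B∪C}` is the block matrix
`[[Σ_AB, Σ_AC], [Σ_CB, Σ_CC]]`. The block `Σ_CC` is a principal submatrix of a positive definite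
matrix, hence invertible, and the Schur factorization multiplies
`diag(Σ_AB - Σ_AC Σ_CC⁻¹ Σ_CB, Σ_CC)` by unitriangular matrices on both sides. So the rank of
`Σ_{A∪C, B∪C}` is `#C` plus the rank of the conditional covariance, which is `#C` exactly when the
conditional covariance vanishes.
-/

open Matrix

def Submodule.prodEquivProd {R M N : Type*} [Semiring R] [AddCommMonoid M] [Module R M]
    [AddCommMonoid N] [Module R N] (p : Submodule R M) (q : Submodule R N) :
    p.prod q ≃ₗ[R] p × q where
  toFun x := (⟨x.1.1, x.2.1⟩, ⟨x.1.2, x.2.2⟩)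
  invFun y := ⟨(y.1.1, y.2.1), ⟨y.1.2, y.2.2⟩⟩
  map_add' _ _ := rfl
  map_smul' _ _ := rfl

namespace Matrix

variable {K l n o p : Type*} [Field K] [Fintype n] [Fintype p]

theorem rank_eq_zero_iff (A : Matrix l n K) : A.rank = 0 ↔ A = 0 := by
  rw [rank, Submodule.finrank_eq_zero, LinearMap.range_eq_bot]
  classical
  exact (toLin' (R := K)).map_eq_zero_iff

theorem mulVecLin_fromBlocks_zero (A : Matrix l n K) (D : Matrix o p K) :
    (fromBlocks A 0 0 D).mulVecLin =
      (LinearEquiv.sumArrowLequivProdArrow l o K K).symm.toLinearMap ∘ₗ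
        A.mulVecLin.prodMap D.mulVecLin ∘ₗ
          (LinearEquiv.sumArrowLequivProdArrow n p K K).toLinearMap := by
  ext x (i | i) <;>
    simp [fromBlocks_mulVec, LinearEquiv.sumArrowLequivProdArrow, Equiv.sumArrowEquivProdArrow]

theorem rank_fromBlocks_zero_zero (A : Matrix l n K) (D : Matrix o p K) :
    (fromBlocks A 0 0 D).rank = A.rank + D.rank := by
  rw [rank, mulVecLin_fromBlocks_zero, LinearMap.range_comp,
    LinearMap.range_comp_of_range_eq_top _ (LinearEquiv.range _), LinearMap.range_prodMap,
    LinearEquiv.finrank_map_eq, (Submodule.prodEquivProd _ _).finrank_eq, Module.finrank_prod,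
    rank, rank]

theorem rank_fromBlocks_eq_rank_schur_add_card [Fintype l] [DecidableEq l] [DecidableEq n]
    [DecidableEq p] (A : Matrix l n K) (B : Matrix l p K) (C : Matrix p n K) (D : Matrix p p K)
    (hD : IsUnit D) :
    (fromBlocks A B C D).rank = (A - B * D⁻¹ * C).rank + Fintype.card p := by
  let := hD.invertible
  rw [fromBlocks_eq_of_invertible₂₂, rank_mul_eq_left_of_isUnit_det,
    rank_mul_eq_right_of_isUnit_det, rank_fromBlocks_zero_zero, rank_of_isUnit D hD,
    invOf_eq_nonsing_inv] <;>
  simp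

theorem rank_submatrix_union_eq {ι : Type*} [DecidableEq ι] (S : Matrix ι ι K)
    {A B C : Finset ι} (hAC : Disjoint A C) (hBC : Disjoint B C)
    (hC : IsUnit (S.submatrix ((↑) : C → ι) ((↑) : C → ι))) :
    (S.submatrix ((↑) : (A ∪ C : Finset ι) → ι) ((↑) : (B ∪ C : Finset ι) → ι)).rank =
      (S.submatrix ((↑) : A → ι) ((↑) : B → ι) - S.submatrix ((↑) : A → ι) ((↑) : C → ι) *
        (S.submatrix ((↑) : C → ι) ((↑) : C → ι))⁻¹ *
          S.submatrix ((↑) : C → ι) ((↑) : B → ι)).rank + C.card := by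
  have hblocks : (S.submatrix ((↑) : (A ∪ C : Finset ι) → ι)
      ((↑) : (B ∪ C : Finset ι) → ι)).submatrix
        (Equiv.Finset.union A C hAC) (Equiv.Finset.union B C hBC) =
      fromBlocks (S.submatrix (↑) (↑)) (S.submatrix (↑) (↑)) (S.submatrix (↑) (↑))
        (S.submatrix (↑) (↑)) := by
    ext (i | i) (j | j) <;> rfl
  rw [← rank_submatrix _ (Equiv.Finset.union A C hAC) (Equiv.Finset.union B C hBC), hblocks,
    rank_fromBlocks_eq_rank_schur_add_card _ _ _ _ hC, Fintype.card_coe]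

end Matrix

theorem stmt2_general (m : ℕ) (Sg : Matrix (Fin m) (Fin m) ℝ) (hSg : Sg.PosDef)
    (A B C : Finset (Fin m)) (hAC : Disjoint A C)
    (hBC : Disjoint B C) :
    (Sg.submatrix (fun a : {x // x ∈ A} => a.1) (fun b : {x // x ∈ B} => b.1)
      - Sg.submatrix (fun a : {x // x ∈ A} => a.1) (fun c : {x // x ∈ C} => c.1)
        * (Sg.submatrix (fun c : {x // x ∈ C} => c.1) (fun c : {x // x ∈ C} => c.1))⁻¹
        * Sg.submatrix (fun c : {x // x ∈ C} => c.1) (fun b : {x // x ∈ B} => b.1) = 0)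
    ↔ (Sg.submatrix (fun a : {x // x ∈ A ∪ C} => a.1)
        (fun b : {x // x ∈ B ∪ C} => b.1)).rank = C.card := by
  have hC := (hSg.submatrix (Subtype.val_injective (p := (· ∈ C)))).isUnit
  rw [Sg.rank_submatrix_union_eq hAC hBC hC, ← Matrix.rank_eq_zero_iff]
  exact add_eq_right.symm

/-- **Conditional independence as a rank condition.** For a multivariate normal
vector with positive definite covariance `Σ` and disjoint index sets `A`, `B`, `C`,
the conditional independence `X_A ⫫ X_B | X_C` (equivalently, the vanishing of the
conditional covariance `Σ_{A,B} - Σ_{A,C} Σ_{C,C}⁻¹ Σ_{C,B}`) holds if and only if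
the submatrix `Σ_{A∪C, B∪C}` has rank exactly `#C`. -/
theorem stmt2 (m : ℕ) (Sg : Matrix (Fin m) (Fin m) ℝ) (hSg : Sg.PosDef)
    (A B C : Finset (Fin m)) (hAB : Disjoint A B) (hAC : Disjoint A C)
    (hBC : Disjoint B C) :
    (Sg.submatrix (fun a : {x // x ∈ A} => a.1) (fun b : {x // x ∈ B} => b.1)
      - Sg.submatrix (fun a : {x // x ∈ A} => a.1) (fun c : {x // x ∈ C} => c.1)
        * (Sg.submatrix (fun c : {x // x ∈ C} => c.1) (fun c : {x // x ∈ C} => c.1))⁻¹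
        * Sg.submatrix (fun c : {x // x ∈ C} => c.1) (fun b : {x // x ∈ B} => b.1) = 0)
    ↔ (Sg.submatrix (fun a : {x // x ∈ A ∪ C} => a.1)
        (fun b : {x // x ∈ B ∪ C} => b.1)).rank = C.card :=
  stmt2_general m Sg hSg A B C hAC hBC
end

section
/- Let $\Lambda$ be an invertible $m\times m$ matrix over a field, $\Phi = \mathrm{diag}(\phi_1,\dots,\phi_m)$ a diagonal matrix of independent indeterminates, and $\Sigma = \Lambda^{-\top}\Phi\Lambda^{-1}$ over the polynomial ring. For subsets $A, B \subseteq [m]$ with $\#A = \#B$, the determinant $\det \Sigma_{A,B}$ equals $\sum_{S \subseteq [m],\, \#S = \#A} \det(\Lambda^{-1})_{S,A}\, \det(\Lambda^{-1})_{S,B}\, \phi_S$ where $\phi_S = \prod_{s\in S}\phi_s$. Consequently, $\det\Sigma_{A,B}$ is identically zero if and only if for every subset $S$ with $\#S = \#A$, either $\det(\Lambda^{-1})_{S,A} = 0$ or $\det(\Lambda^{-1})_{S,B} = 0$. -/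
/-!
Expanding every row of `P * Q` by multilinearity writes `det (P * Q)` as a sum over maps
`f : Fin r → α`; the terms with `f` non-injective vanish, and an injective `f` is the increasing
enumeration of its image `S` composed with a permutation, which gives Cauchy–Binet. Applied to
`Σ_{A,B} = ((Λ⁻¹)ᵀ)_{A,·} (Φ Λ⁻¹)_{·,B}`, with `det (Φ Λ⁻¹)_{S,B} = φ_S det (Λ⁻¹)_{S,B}`,
it gives the expansion. The squarefree monomials `φ_S` are distinct for distinct `S`, so the
expansion vanishes iff every coefficient does.
-/

open Matrix MvPolynomial

/-- The minor of an `m × m` matrix with rows indexed by `A` and columns by `B`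
(both listed in increasing order); junk value `0` if `#A ≠ #B`. -/
noncomputable def subdet {m : ℕ} {R : Type*} [CommRing R]
    (M : Matrix (Fin m) (Fin m) R) (A B : Finset (Fin m)) : R :=
  if h : A.card = B.card then
    (M.submatrix (fun i : Fin A.card => ((A.orderIsoOfFin rfl) i).1)
      (fun i : Fin A.card => ((B.orderIsoOfFin h.symm) i).1)).det
  else 0

open Finset Equiv

section CauchyBinet

variable {α : Type*} [Fintype α] {r : ℕ}

theorem Matrix.det_mul_eq_sum_prod_mul_det_submatrix {R : Type*} [CommRing R]
    (P : Matrix (Fin r) α R) (Q : Matrix α (Fin r) R) :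
    (P * Q).det = ∑ f : Fin r → α, (∏ i, P i (f i)) * (Q.submatrix f id).det := by
  have hrows : P * Q = of fun i => ∑ k, P i k • Q k := by
    ext i j
    simp [Matrix.mul_apply, Finset.sum_apply]
  have := (detRowAlternating (n := Fin r) (R := R)).toMultilinearMap.map_sum
    (fun i k => P i k • Q k)
  simp only [AlternatingMap.coe_multilinearMap, AlternatingMap.map_smul_univ, smul_eq_mul] at this
  rw [hrows]
  exact this

variable [LinearOrder α]

theorem Finset.sum_filter_injective_eq_sum_card_eq_sum_perm {M : Type*} [AddCommMonoid M]
    (G : (Fin r → α) → M) :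
    ∑ f : Fin r → α with f.Injective, G f
      = ∑ S : {S : Finset α // S.card = r}, ∑ σ : Perm (Fin r),
          G (S.1.orderEmbOfFin S.2 ∘ σ) := by
  rw [← Fintype.sum_prod_type']
  symm
  refine Finset.sum_bij (fun p _ => p.1.1.orderEmbOfFin p.1.2 ∘ p.2) ?_ ?_ ?_ (fun _ _ => rfl)
  · intro p _
    simpa using (p.1.1.orderEmbOfFin p.1.2).injective.comp p.2.injective
  · rintro ⟨⟨S, hS⟩, σ⟩ - ⟨⟨T, hT⟩, τ⟩ - h
    have hST : S = T := by
      have := congrArg Set.range h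
      simp only [EquivLike.range_comp, range_orderEmbOfFin] at this
      exact_mod_cast this
    subst hST
    simpa [DFunLike.coe_fn_eq] using (S.orderEmbOfFin hS).injective.comp_left h
  · intro f hf
    have hf : f.Injective := (mem_filter.mp hf).2
    have hS : (univ.image f).card = r := by simp [card_image_of_injective _ hf]
    have hsort : f ∘ Tuple.sort f = (univ.image f).orderEmbOfFin hS :=
      orderEmbOfFin_unique hS (fun i => mem_image_of_mem f (mem_univ _))
        ((Tuple.monotone_sort f).strictMono_of_injective (hf.comp (Tuple.sort f).injective))
    refine ⟨(⟨univ.image f, hS⟩, (Tuple.sort f)⁻¹), mem_univ _, ?_⟩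
    rw [← hsort]
    ext i
    simp

theorem Matrix.det_mul_eq_sum_det_submatrix_mul_det_submatrix {R : Type*} [CommRing R]
    (P : Matrix (Fin r) α R) (Q : Matrix α (Fin r) R) :
    (P * Q).det = ∑ S : {S : Finset α // S.card = r},
      (P.submatrix id (S.1.orderEmbOfFin S.2)).det
        * (Q.submatrix (S.1.orderEmbOfFin S.2) id).det := by
  classical
  have h_noninj : ∀ f : Fin r → α, ¬ f.Injective → (Q.submatrix f id).det = 0 := by
    intro f hf
    obtain ⟨i, j, hfij, hij⟩ : ∃ i j, f i = f j ∧ i ≠ j := by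
      simpa [Function.Injective] using hf
    exact det_zero_of_row_eq hij (by ext k; simp [hfij])
  rw [det_mul_eq_sum_prod_mul_det_submatrix, ← sum_filter_of_ne (p := Function.Injective)
    fun f _ hf => by_contra fun h => hf (by rw [h_noninj f h, mul_zero]),
    sum_filter_injective_eq_sum_card_eq_sum_perm]
  refine Fintype.sum_congr _ _ fun S => ?_
  set e := S.1.orderEmbOfFin S.2
  calc ∑ σ : Perm (Fin r), (∏ i, P i (e (σ i))) * (Q.submatrix (e ∘ σ) id).det
      = (∑ σ : Perm (Fin r), Perm.sign σ * ∏ i, (P.submatrix id e)ᵀ (σ i) i)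
          * (Q.submatrix e id).det := by
        rw [sum_mul]
        refine Fintype.sum_congr _ _ fun σ => ?_
        rw [show Q.submatrix (e ∘ σ) id = (Q.submatrix e id).submatrix σ id from rfl,
          det_permute]
        simp only [transpose_apply, submatrix_apply, id]
        ring
    _ = _ := by rw [← det_apply', det_transpose]

end CauchyBinet

section Minors

variable {R : Type*} [CommRing R] {m : ℕ}

theorem subdet_eq_det_submatrix (M : Matrix (Fin m) (Fin m) R) {A B : Finset (Fin m)} {r : ℕ}
    (hA : A.card = r) (hB : B.card = r) :
    subdet M A B = (M.submatrix (A.orderEmbOfFin hA) (B.orderEmbOfFin hB)).det := by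
  rw [subdet, dif_pos (hA.trans hB.symm), ← det_submatrix_equiv_self (finCongr hA)]
  rfl

theorem subdet_mul (M N : Matrix (Fin m) (Fin m) R) {A B : Finset (Fin m)}
    (hAB : A.card = B.card) :
    subdet (M * N) A B = ∑ S ∈ univ.powersetCard A.card, subdet M A S * subdet N S B := by
  rw [subdet_eq_det_submatrix (M * N) rfl hAB.symm,
    submatrix_mul _ _ _ id _ Function.bijective_id,
    det_mul_eq_sum_det_submatrix_mul_det_submatrix,
    sum_subtype (p := fun S : Finset (Fin m) => S.card = A.card) _ (by simp)]
  refine Fintype.sum_congr _ _ fun S => ?_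
  rw [subdet_eq_det_submatrix M rfl S.2, subdet_eq_det_submatrix N S.2 hAB.symm]
  rfl

theorem subdet_transpose (M : Matrix (Fin m) (Fin m) R) (A B : Finset (Fin m)) :
    subdet Mᵀ A B = subdet M B A := by
  by_cases h : A.card = B.card
  · rw [subdet_eq_det_submatrix Mᵀ rfl h.symm, subdet_eq_det_submatrix M h.symm rfl,
      ← det_transpose]
    rfl
  · simp [subdet, h, Ne.symm h]

theorem subdet_diagonal_mul (d : Fin m → R) (N : Matrix (Fin m) (Fin m) R)
    (A B : Finset (Fin m)) :
    subdet (diagonal d * N) A B = (∏ a ∈ A, d a) * subdet N A B := by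
  by_cases h : A.card = B.card
  · have hprod : ∏ i, d (A.orderEmbOfFin rfl i) = ∏ a ∈ A, d a := by
      exact (prod_map univ (A.orderEmbOfFin rfl).toEmbedding d).symm.trans
        (by rw [map_orderEmbOfFin_univ])
    rw [subdet_eq_det_submatrix _ rfl h.symm, subdet_eq_det_submatrix _ rfl h.symm, ← hprod,
      ← det_diagonal, ← det_mul]
    congr 1
    ext i j
    simp [diagonal_mul]
  · simp [subdet, h]

theorem subdet_map {S : Type*} [CommRing S] (f : R →+* S) (M : Matrix (Fin m) (Fin m) R)
    (A B : Finset (Fin m)) :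
    subdet (M.map f) A B = f (subdet M A B) := by
  unfold subdet
  split_ifs
  · rw [submatrix_map, RingHom.map_det]
    rfl
  · simp

end Minors

section Monomials

variable {σ R : Type*} [CommSemiring R]

theorem MvPolynomial.coeff_indicator_prod_X [DecidableEq σ] (S T : Finset σ) :
    coeff (Finsupp.indicator T fun _ _ => 1) (∏ i ∈ S, (X i : MvPolynomial σ R))
      = if S = T then 1 else 0 := by
  have h := coeff_prod_X_pow (R := R) (Finsupp.indicator T fun _ _ => 1) (fun _ => 1) S
  simp only [pow_one] at h
  refine h.trans (if_congr ⟨fun hTS => ?_, fun hST => hST ▸ rfl⟩ rfl rfl)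
  ext i
  have hi := DFunLike.congr_fun hTS i
  simp only [Finsupp.indicator_apply] at hi
  split_ifs at hi <;> tauto

theorem MvPolynomial.sum_C_mul_prod_X_eq_zero_iff (s : Finset (Finset σ)) (c : Finset σ → R) :
    ∑ S ∈ s, C (c S) * ∏ i ∈ S, (X i : MvPolynomial σ R) = 0 ↔ ∀ S ∈ s, c S = 0 := by
  classical
  refine ⟨fun h T hT => ?_, fun h => sum_eq_zero fun S hS => by simp [h S hS]⟩
  simpa [coeff_sum, coeff_indicator_prod_X, hT] using
    congrArg (coeff (Finsupp.indicator T fun _ _ => 1)) h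

end Monomials

theorem stmt3_general (m : ℕ) (F : Type*) [Field F] (Λ : Matrix (Fin m) (Fin m) F)
    (A B : Finset (Fin m)) (hcard : A.card = B.card) :
    subdet (((Λ⁻¹).map (MvPolynomial.C : F →+* MvPolynomial (Fin m) F))ᵀ
        * Matrix.diagonal (fun v => (X v : MvPolynomial (Fin m) F))
        * (Λ⁻¹).map (MvPolynomial.C : F →+* MvPolynomial (Fin m) F)) A B
      = ∑ S ∈ (Finset.univ : Finset (Fin m)).powersetCard A.card,
          subdet ((Λ⁻¹).map (MvPolynomial.C : F →+* MvPolynomial (Fin m) F)) S A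
            * subdet ((Λ⁻¹).map (MvPolynomial.C : F →+* MvPolynomial (Fin m) F)) S B
            * ∏ s ∈ S, X s
    ∧ (subdet (((Λ⁻¹).map (MvPolynomial.C : F →+* MvPolynomial (Fin m) F))ᵀ
        * Matrix.diagonal (fun v => (X v : MvPolynomial (Fin m) F))
        * (Λ⁻¹).map (MvPolynomial.C : F →+* MvPolynomial (Fin m) F)) A B = 0
      ↔ ∀ S : Finset (Fin m), S.card = A.card →
          subdet ((Λ⁻¹).map (MvPolynomial.C : F →+* MvPolynomial (Fin m) F)) S A = 0
          ∨ subdet ((Λ⁻¹).map (MvPolynomial.C : F →+* MvPolynomial (Fin m) F)) S B = 0) := by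
  set P := (Λ⁻¹).map (MvPolynomial.C : F →+* MvPolynomial (Fin m) F)
  have expansion : subdet (Pᵀ * diagonal (fun v => X v) * P) A B
      = ∑ S ∈ univ.powersetCard A.card, subdet P S A * subdet P S B * ∏ s ∈ S, X s := by
    rw [mul_assoc, subdet_mul _ _ hcard]
    refine sum_congr rfl fun S _ => ?_
    rw [subdet_transpose, subdet_diagonal_mul]
    ring
  have hC : ∀ S T, subdet P S T = C (subdet Λ⁻¹ S T) := fun S T => subdet_map C Λ⁻¹ S T
  refine ⟨expansion, ?_⟩
  simp_rw [expansion, hC, ← map_mul, sum_C_mul_prod_X_eq_zero_iff, mem_powersetCard,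
    subset_univ, true_and, mul_eq_zero, C_eq_zero]

/-- **Cauchy–Binet expansion of `det Σ_{A,B}`.** For an invertible matrix `Λ` over a
field, `Φ = diag(φ₁,…,φ_m)` a diagonal matrix of indeterminates, and
`Σ = Λ⁻ᵀ Φ Λ⁻¹`, one has
`det Σ_{A,B} = ∑_{#S = #A} det(Λ⁻¹)_{S,A} det(Λ⁻¹)_{S,B} φ_S`, and consequently
`det Σ_{A,B} = 0` iff for every `S` with `#S = #A`, `det(Λ⁻¹)_{S,A} = 0` or
`det(Λ⁻¹)_{S,B} = 0`. -/
theorem stmt3 (m : ℕ) (F : Type*) [Field F] (Λ : Matrix (Fin m) (Fin m) F)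
    (hΛ : IsUnit Λ.det) (A B : Finset (Fin m)) (hcard : A.card = B.card) :
    subdet (((Λ⁻¹).map (MvPolynomial.C : F →+* MvPolynomial (Fin m) F))ᵀ
        * Matrix.diagonal (fun v => (X v : MvPolynomial (Fin m) F))
        * (Λ⁻¹).map (MvPolynomial.C : F →+* MvPolynomial (Fin m) F)) A B
      = ∑ S ∈ (Finset.univ : Finset (Fin m)).powersetCard A.card,
          subdet ((Λ⁻¹).map (MvPolynomial.C : F →+* MvPolynomial (Fin m) F)) S A
            * subdet ((Λ⁻¹).map (MvPolynomial.C : F →+* MvPolynomial (Fin m) F)) S B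
            * ∏ s ∈ S, X s
    ∧ (subdet (((Λ⁻¹).map (MvPolynomial.C : F →+* MvPolynomial (Fin m) F))ᵀ
        * Matrix.diagonal (fun v => (X v : MvPolynomial (Fin m) F))
        * (Λ⁻¹).map (MvPolynomial.C : F →+* MvPolynomial (Fin m) F)) A B = 0
      ↔ ∀ S : Finset (Fin m), S.card = A.card →
          subdet ((Λ⁻¹).map (MvPolynomial.C : F →+* MvPolynomial (Fin m) F)) S A = 0
          ∨ subdet ((Λ⁻¹).map (MvPolynomial.C : F →+* MvPolynomial (Fin m) F)) S B = 0) :=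
  stmt3_general m F Λ A B hcard
end

section
/- Let $G$ be a directed acyclic graph on $[m]$ with edge indeterminates and $\Lambda = I - L$. For $R, S \subseteq [m]$ with $\#R = \#S = \ell$, the minor $\det(\Lambda^{-1})_{R,S}$ is identically zero (as a polynomial) if and only if every system of $\ell$ directed paths from $R$ to $S$ contains two paths that share a vertex. -/
open Matrix MvPolynomial

/-!
Since `Λ = 1 - L` is unitriangular, Jacobi's complementary minor formula turns
`det (Λ⁻¹)_{R,S}` into `± det Λ_{Sᶜ,Rᶜ}`. In the expansion of that minor every permutation
contributes `±` a squarefree monomial in the edge variables, and distinct permutations give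
distinct monomials, so the minor vanishes iff no permutation has all its entries nonzero, i.e. iff
there is no bijection `Rᶜ ≃ Sᶜ` moving every vertex to itself or to an in-neighbour. Such
bijections correspond to vertex-disjoint path systems from `R` to `S` (Ingleton–Piff): the
predecessor map along the paths is one, and conversely, iterating the inverse bijection from each
vertex of `R` traces pairwise disjoint paths ending in `S`.
-/

open Finset

namespace Matrix

variable {n ι₁ ι₂ R : Type*} [Fintype n] [DecidableEq n] [Fintype ι₁] [DecidableEq ι₁]
  [Fintype ι₂] [DecidableEq ι₂] [CommRing R]

theorem det_mul_det_toBlocks₁₁_of_mul_eq_one {P Q : Matrix (ι₁ ⊕ ι₂) (ι₁ ⊕ ι₂) R}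
    (h : P * Q = 1) : P.det * Q.toBlocks₁₁.det = P.toBlocks₂₂.det := by
  have hcol : P * fromBlocks Q.toBlocks₁₁ 0 Q.toBlocks₂₁ 1 =
      fromBlocks 1 P.toBlocks₁₂ 0 P.toBlocks₂₂ := by
    rw [← fromBlocks_toBlocks P, ← fromBlocks_toBlocks Q, fromBlocks_multiply, ← fromBlocks_one,
      fromBlocks_inj] at h
    rw [← fromBlocks_toBlocks P, fromBlocks_multiply, h.1, h.2.2.1]
    simp
  have := congrArg det hcol
  rwa [det_mul, det_fromBlocks_zero₁₂, det_fromBlocks_zero₂₁, det_one, det_one, mul_one,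
    one_mul] at this

theorem det_submatrix_mul_det_nonsing_inv_submatrix {A : Matrix n n R} (hA : IsUnit A.det)
    (eR eS : ι₁ ⊕ ι₂ ≃ n) :
    (A.submatrix eS eR).det * (A⁻¹.submatrix (eR ∘ Sum.inl) (eS ∘ Sum.inl)).det =
      (A.submatrix (eS ∘ Sum.inr) (eR ∘ Sum.inr)).det :=
  det_mul_det_toBlocks₁₁_of_mul_eq_one (Q := A⁻¹.submatrix eR eS) <| by
    rw [submatrix_mul_equiv, mul_nonsing_inv A hA, submatrix_one_equiv]

end Matrix

section EdgeMatrix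

variable {V ι : Type*} [DecidableEq V] {E : V → V → Prop} [DecidableRel E] {K : Type*} [CommRing K]

variable (E K) in
noncomputable def edgeMatrix : Matrix V V (MvPolynomial (V × V) K) :=
  Matrix.of fun a b => if E a b then X (a, b) else 0

variable (K) in
theorem one_sub_edgeMatrix_apply_of_ne {a b : V} (hab : a ≠ b) :
    (1 - edgeMatrix E K) a b = if E a b then -X (a, b) else 0 := by
  by_cases h : E a b <;> simp [edgeMatrix, hab, h]

variable (K) in
theorem one_sub_edgeMatrix_apply_self {a : V} (ha : ¬E a a) : (1 - edgeMatrix E K) a a = 1 := by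
  simp [edgeMatrix, ha]

theorem det_one_sub_edgeMatrix [Fintype V] [LinearOrder V] (hE : ∀ u v, E u v → u < v) :
    (1 - edgeMatrix E K).det = 1 := by
  have hupper : (1 - edgeMatrix E K).BlockTriangular id := fun a b hba =>
    (one_sub_edgeMatrix_apply_of_ne K (a := a) (b := b) hba.ne').trans
      (if_neg fun h => (hE a b h).not_gt hba)
  rw [det_of_isUpperTriangular hupper]
  exact Finset.prod_eq_one fun a _ => one_sub_edgeMatrix_apply_self K fun h => (hE a a h).false

noncomputable def entryExponent (a b : V) : V × V →₀ ℕ :=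
  if a = b then 0 else Finsupp.single (a, b) 1

theorem one_sub_edgeMatrix_apply_eq_monomial (hirr : ∀ v, ¬E v v) {a b : V} (h : a = b ∨ E a b) :
    (1 - edgeMatrix E K) a b = monomial (entryExponent a b) (if a = b then 1 else -1 : K) := by
  by_cases hab : a = b
  · subst hab
    simp [one_sub_edgeMatrix_apply_self K (hirr a), entryExponent]
  · rw [one_sub_edgeMatrix_apply_of_ne K hab, if_pos (h.resolve_left hab)]
    rw [entryExponent, if_neg hab, if_neg hab, map_neg]
    rfl

variable [Fintype ι] {σ ρ : ι → V}

theorem sum_entryExponent_apply (hρ : Function.Injective ρ) (π : Equiv.Perm ι) (u : V) (j : ι) :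
    (∑ k, entryExponent (σ (π k)) (ρ k)) (u, ρ j) =
      if σ (π j) ≠ ρ j ∧ σ (π j) = u then 1 else 0 := by
  rw [Finsupp.finsetSum_apply, Finset.sum_eq_single j]
  · by_cases h : σ (π j) = ρ j <;> simp [entryExponent, h, Finsupp.single_apply]
  · intro k _ hkj
    have : ρ k ≠ ρ j := hρ.ne hkj
    by_cases h : σ (π k) = ρ k <;> simp [entryExponent, h, this]
  · simp

theorem injective_sum_entryExponent (hσ : Function.Injective σ) (hρ : Function.Injective ρ) :
    Function.Injective fun π : Equiv.Perm ι => ∑ k, entryExponent (σ (π k)) (ρ k) := by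
  intro π π' h
  ext j
  -- column `ρ j` of the exponent records the row `σ (π j)`, except on the diagonal
  have hj : ∀ u, (σ (π j) ≠ ρ j ∧ σ (π j) = u) ↔ (σ (π' j) ≠ ρ j ∧ σ (π' j) = u) := fun u => by
    have := congrArg (· (u, ρ j)) h
    simp only [sum_entryExponent_apply hρ] at this
    split_ifs at this <;> tauto
  refine hσ ?_
  by_cases h₁ : σ (π j) = ρ j <;> by_cases h₂ : σ (π' j) = ρ j
  · exact h₁.trans h₂.symm
  · exact absurd h₁ ((hj _).mpr ⟨h₂, rfl⟩).1
  · exact ((hj _).mp ⟨h₁, rfl⟩).2.symm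
  · exact ((hj _).mp ⟨h₁, rfl⟩).2.symm

theorem prod_one_sub_edgeMatrix_eq_monomial (hirr : ∀ v, ¬E v v) {π : Equiv.Perm ι}
    (hπ : ∀ j, σ (π j) = ρ j ∨ E (σ (π j)) (ρ j)) :
    ∏ j, (1 - edgeMatrix E K) (σ (π j)) (ρ j) =
      monomial (∑ j, entryExponent (σ (π j)) (ρ j)) (∏ j, if σ (π j) = ρ j then 1 else -1) := by
  rw [monomial_sum_prod]
  exact Finset.prod_congr rfl fun j _ => one_sub_edgeMatrix_apply_eq_monomial hirr (hπ j)

theorem prod_one_sub_edgeMatrix_eq_zero {π : Equiv.Perm ι} {j : ι}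
    (hj : ¬(σ (π j) = ρ j ∨ E (σ (π j)) (ρ j))) :
    ∏ k, (1 - edgeMatrix E K) (σ (π k)) (ρ k) = 0 := by
  obtain ⟨hne, hnE⟩ := not_or.mp hj
  exact Finset.prod_eq_zero (Finset.mem_univ j)
    ((one_sub_edgeMatrix_apply_of_ne K hne).trans (if_neg hnE))

theorem coeff_prod_one_sub_edgeMatrix [DecidableEq ι] (hirr : ∀ v, ¬E v v)
    (hσ : Function.Injective σ) (hρ : Function.Injective ρ) {π : Equiv.Perm ι}
    (hπ : ∀ j, σ (π j) = ρ j ∨ E (σ (π j)) (ρ j)) (π' : Equiv.Perm ι) :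
    coeff (∑ j, entryExponent (σ (π j)) (ρ j)) (∏ j, (1 - edgeMatrix E K) (σ (π' j)) (ρ j)) =
      if π' = π then ∏ j, if σ (π j) = ρ j then 1 else -1 else 0 := by
  by_cases hπ' : ∀ j, σ (π' j) = ρ j ∨ E (σ (π' j)) (ρ j)
  · rw [prod_one_sub_edgeMatrix_eq_monomial hirr hπ', coeff_monomial]
    simp_rw [(injective_sum_entryExponent hσ hρ).eq_iff]
    split_ifs with h
    · rw [h]
    · rfl
  · obtain ⟨j, hj⟩ := not_forall.mp hπ'
    rw [prod_one_sub_edgeMatrix_eq_zero hj, coeff_zero, if_neg]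
    rintro rfl
    exact hj (hπ j)

/-- Distinct permutations contribute distinct monomials, so nothing cancels. -/
theorem det_submatrix_one_sub_edgeMatrix_ne_zero_iff [DecidableEq ι] [Nontrivial K]
    (hirr : ∀ v, ¬E v v) (hσ : Function.Injective σ) (hρ : Function.Injective ρ) :
    ((1 - edgeMatrix E K).submatrix σ ρ).det ≠ 0 ↔
      ∃ π : Equiv.Perm ι, ∀ j, σ (π j) = ρ j ∨ E (σ (π j)) (ρ j) := by
  rw [det_apply]
  simp only [submatrix_apply]
  constructor
  · intro h
    obtain ⟨π, -, hπ⟩ := Finset.exists_ne_zero_of_sum_ne_zero h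
    refine ⟨π, fun j => ?_⟩
    by_contra hj
    rw [prod_one_sub_edgeMatrix_eq_zero hj, smul_zero] at hπ
    exact hπ rfl
  · rintro ⟨π, hπ⟩ hdet
    have hcoeff := congrArg (coeff (∑ j, entryExponent (σ (π j)) (ρ j))) hdet
    simp only [coeff_sum, Units.smul_def, coeff_smul, coeff_prod_one_sub_edgeMatrix hirr hσ hρ hπ,
      smul_ite, smul_zero, Finset.sum_ite_eq', Finset.mem_univ, if_true, coeff_zero] at hcoeff
    have hunit : IsUnit (∏ j, if σ (π j) = ρ j then (1 : K) else -1) :=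
      IsUnit.prod_univ_iff.mpr fun j => by split_ifs <;> simp
    rcases Int.units_eq_one_or (Equiv.Perm.sign π) with h | h <;>
      simp [h, hunit.ne_zero] at hcoeff

end EdgeMatrix

namespace List

variable {α : Type*}

theorem exists_pair_infix_of_mem_tail {a v : α} {t : List α} (hv : v ∈ t) :
    ∃ u, [u, v] <:+: a :: t := by
  induction t generalizing a with
  | nil => simp at hv
  | cons b t ih =>
    rcases mem_cons.mp hv with rfl | hv
    · exact ⟨a, (prefix_append [a, v] t).isInfix⟩
    · obtain ⟨u, hu⟩ := ih (a := b) hv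
      exact ⟨u, hu.trans (suffix_cons a _).isInfix⟩

theorem Pairwise.le_of_pair_infix [Preorder α] {l : List α} (hl : l.Pairwise (· < ·)) {a b x : α}
    (h : [a, b] <:+: l) (hx : x ∈ l) (hax : a < x) : b ≤ x := by
  obtain ⟨s, t, rfl⟩ := h
  simp only [pairwise_append, mem_append, mem_cons, mem_nil_iff, or_false] at hl hx
  rcases hx with (hx | rfl | rfl) | hx
  · exact absurd hax (hl.1.2.2 x hx a (.inl rfl)).asymm
  · exact absurd hax (lt_irrefl _)
  · exact le_rfl
  · exact (hl.2.2 b (.inr (.inr rfl)) x hx).le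

theorem Pairwise.eq_of_pair_infix [PartialOrder α] {l : List α} (hl : l.Pairwise (· < ·))
    {a b c : α} (hb : [a, b] <:+: l) (hc : [a, c] <:+: l) : b = c :=
  le_antisymm
    (hl.le_of_pair_infix hb (hc.subset (by simp)) (pairwise_pair.mp (hl.sublist hc.sublist)))
    (hl.le_of_pair_infix hc (hb.subset (by simp)) (pairwise_pair.mp (hl.sublist hb.sublist)))

end List

section Paths

variable {V : Type*} {E : V → V → Prop} {p : List V} {a b u v : V}

theorem IsPath.last_mem (h : IsPath E p a b) : b ∈ p := List.mem_of_getLast? h.2.1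

theorem IsPath.rel_of_pair_infix (h : IsPath E p a b) (huv : [u, v] <:+: p) : E u v :=
  List.isChain_pair.mp (List.IsChain.infix h.2.2 huv)

theorem IsPath.exists_pair_infix (h : IsPath E p a b) (hv : v ∈ p) (hva : v ≠ a) :
    ∃ u, [u, v] <:+: p := by
  obtain ⟨t, rfl⟩ := List.head?_eq_some_iff.mp h.1
  exact List.exists_pair_infix_of_mem_tail ((List.mem_cons.mp hv).resolve_left hva)

theorem IsPath.pairwise_lt [Preorder V] (hE : ∀ u v, E u v → u < v) (h : IsPath E p a b) :
    p.Pairwise (· < ·) :=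
  List.isChain_iff_pairwise.mp (List.IsChain.imp hE h.2.2)

theorem IsPath.le_of_mem [Preorder V] (hE : ∀ u v, E u v → u < v) (h : IsPath E p a b)
    (hv : v ∈ p) : v ≤ b := by
  have hp := h.pairwise_lt hE
  obtain ⟨t, rfl⟩ := List.getLast?_eq_some_iff.mp h.2.1
  rw [List.pairwise_append] at hp
  rcases List.mem_append.mp hv with hv | hv
  · exact (hp.2.2 v hv b (by simp)).le
  · exact (List.mem_singleton.mp hv).le

end Paths

section Walk

variable {α : Type*} (p : α → Prop) [DecidablePred p] (f : α → α)

def walkUntil : ℕ → α → List α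
  | 0, a => [a]
  | n + 1, a => if p a then [a] else a :: walkUntil n (f a)

variable {p f}

theorem walkUntil_ne_nil (n : ℕ) (a : α) : walkUntil p f n a ≠ [] := by
  cases n <;> simp only [walkUntil] <;> (try split_ifs) <;> simp

theorem head?_walkUntil (n : ℕ) (a : α) : (walkUntil p f n a).head? = some a := by
  cases n <;> simp only [walkUntil] <;> (try split_ifs) <;> simp

theorem mem_walkUntil {n : ℕ} {a x : α} (hx : x ∈ walkUntil p f n a) :
    x = a ∨ ∃ y ∈ walkUntil p f n a, ¬p y ∧ x = f y := by
  induction n generalizing a with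
  | zero => exact .inl (by simpa [walkUntil] using hx)
  | succ n ih =>
    simp only [walkUntil] at hx ⊢
    split_ifs at hx ⊢ with ha
    · exact .inl (by simpa using hx)
    · rcases List.mem_cons.mp hx with rfl | hx
      · exact .inl rfl
      · rcases ih hx with rfl | ⟨y, hy, hpy, rfl⟩
        · exact .inr ⟨a, List.mem_cons_self, ha, rfl⟩
        · exact .inr ⟨y, List.mem_cons_of_mem _ hy, hpy, rfl⟩

theorem isChain_walkUntil {E : α → α → Prop} {Q : α → Prop}
    (hstep : ∀ x, Q x → ¬p x → E x (f x) ∧ Q (f x)) (n : ℕ) {a : α} (ha : Q a) :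
    (walkUntil p f n a).IsChain E ∧ ∀ x ∈ walkUntil p f n a, Q x := by
  induction n generalizing a with
  | zero => simpa [walkUntil] using ha
  | succ n ih =>
    simp only [walkUntil]
    split_ifs with hpa
    · simpa using ha
    · obtain ⟨hE, hQ⟩ := hstep a ha hpa
      obtain ⟨ihc, ihQ⟩ := ih hQ
      refine ⟨List.isChain_cons.mpr ⟨?_, ihc⟩, List.forall_mem_cons.mpr ⟨ha, ihQ⟩⟩
      simpa [head?_walkUntil] using hE

theorem walkUntil_getLast_or_length (n : ℕ) (a : α) :
    p ((walkUntil p f n a).getLast (walkUntil_ne_nil n a)) ∨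
      (walkUntil p f n a).length = n + 1 := by
  induction n generalizing a with
  | zero => simp [walkUntil]
  | succ n ih =>
    simp only [walkUntil]
    split_ifs with hpa
    · simpa using hpa
    · simpa [List.getLast_cons (walkUntil_ne_nil n (f a))] using ih (f a)

theorem getLast_walkUntil_card [Fintype α] [Preorder α]
    {a : α} (h : (walkUntil p f (Fintype.card α) a).IsChain (· < ·)) :
    p ((walkUntil p f (Fintype.card α) a).getLast (walkUntil_ne_nil _ a)) := by
  refine (walkUntil_getLast_or_length _ a).resolve_right fun hlen => ?_
  have := (List.isChain_iff_pairwise.mp h).nodup.length_le_card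
  omega

theorem eq_of_mem_walkUntil_of_mem_walkUntil [LT α] [WellFoundedLT α] {ι : Type*}
    {a : ι → α} (ha : Function.Injective a) (hfa : ∀ x i, ¬p x → f x ≠ a i)
    (hf : ∀ x y, ¬p x → ¬p y → f x = f y → x = y) {n : ℕ}
    (hlt : ∀ i, ∀ x ∈ walkUntil p f n (a i), ¬p x → x < f x) (w : α) {i j : ι}
    (hi : w ∈ walkUntil p f n (a i)) (hj : w ∈ walkUntil p f n (a j)) : i = j := by
  induction w using WellFoundedLT.induction generalizing i j with
  | _ w ih =>
  rcases mem_walkUntil hi with rfl | ⟨u, hu, hpu, rfl⟩ <;>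
    rcases mem_walkUntil hj with h | ⟨u', hu', hpu', h⟩
  · exact ha h
  · exact absurd h.symm (hfa u' i hpu')
  · exact absurd h (hfa u j hpu)
  · obtain rfl := hf u u' hpu hpu' h
    exact ih u (hlt i u hu hpu) hu hu'

end Walk

section DisjointPaths

variable {V ι : Type*} {E : V → V → Prop} {R S : Finset V} {r : ι ≃ R} {s : ι ≃ S} {P : ι → List V}

theorem notMem_of_pair_infix_of_disjoint_paths [LinearOrder V] (hE : ∀ u v, E u v → u < v)
    (hP : ∀ i, IsPath E (P i) (r i) (s i)) (hdisj : ∀ i j v, v ∈ P i → v ∈ P j → i = j) {i : ι}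
    {u v : V} (huv : [u, v] <:+: P i) : u ∉ S := by
  intro huS
  set j := s.symm ⟨u, huS⟩
  have hu : (s j : V) = u := by simp [j]
  have hi : i = j := hdisj _ _ u (huv.subset (by simp)) (hu ▸ (hP j).last_mem)
  have hvu : v ≤ u := hu ▸ hi ▸ (hP i).le_of_mem hE (huv.subset (by simp))
  exact hvu.not_gt (hE u v ((hP i).rel_of_pair_infix huv))

theorem exists_pair_infix_of_mem_of_notMem (hP : ∀ i, IsPath E (P i) (r i) (s i)) {i : ι} {v : V}
    (hv : v ∈ P i) (hvR : v ∉ R) : ∃ u, [u, v] <:+: P i :=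
  (hP i).exists_pair_infix hv fun h => hvR (h ▸ (r i).2)

open Classical in
noncomputable def pathPred (P : ι → List V) (v : V) : V :=
  if h : ∃ u i, [u, v] <:+: P i then h.choose else v

theorem exists_pair_infix_pathPred {v : V} (h : ∃ u i, [u, v] <:+: P i) :
    ∃ i, [pathPred P v, v] <:+: P i := by
  simpa [pathPred, h] using h.choose_spec

theorem pathPred_of_not_exists {v : V} (h : ¬∃ u i, [u, v] <:+: P i) : pathPred P v = v := by
  simp [pathPred, h]

theorem pathPred_eq_or_rel (hP : ∀ i, IsPath E (P i) (r i) (s i)) (v : V) :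
    pathPred P v = v ∨ E (pathPred P v) v := by
  by_cases h : ∃ u i, [u, v] <:+: P i
  · obtain ⟨i, hi⟩ := exists_pair_infix_pathPred h
    exact .inr ((hP i).rel_of_pair_infix hi)
  · exact .inl (pathPred_of_not_exists h)

theorem pathPred_notMem [LinearOrder V] (hE : ∀ u v, E u v → u < v)
    (hP : ∀ i, IsPath E (P i) (r i) (s i))
    (hdisj : ∀ i j v, v ∈ P i → v ∈ P j → i = j) {v : V} (hvR : v ∉ R) : pathPred P v ∉ S := by
  by_cases h : ∃ u i, [u, v] <:+: P i
  · obtain ⟨i, hi⟩ := exists_pair_infix_pathPred h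
    exact notMem_of_pair_infix_of_disjoint_paths hE hP hdisj hi
  · rw [pathPred_of_not_exists h]
    intro hvS
    obtain ⟨u, hu⟩ := exists_pair_infix_of_mem_of_notMem hP
      (by simpa using (hP (s.symm ⟨v, hvS⟩)).last_mem) hvR
    exact h ⟨u, _, hu⟩

theorem pathPred_ne (hP : ∀ i, IsPath E (P i) (r i) (s i)) {v w : V} (hwR : w ∉ R)
    (hv : ∃ u i, [u, v] <:+: P i) (hw : ¬∃ u i, [u, w] <:+: P i) : pathPred P v ≠ pathPred P w := by
  intro hvw
  obtain ⟨i, hi⟩ := exists_pair_infix_pathPred hv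
  rw [hvw, pathPred_of_not_exists hw] at hi
  obtain ⟨u, hu⟩ := exists_pair_infix_of_mem_of_notMem hP (hi.subset (by simp)) hwR
  exact hw ⟨u, i, hu⟩

theorem pathPred_injOn [LinearOrder V] (hE : ∀ u v, E u v → u < v)
    (hP : ∀ i, IsPath E (P i) (r i) (s i))
    (hdisj : ∀ i j v, v ∈ P i → v ∈ P j → i = j) {v w : V} (hvR : v ∉ R) (hwR : w ∉ R)
    (hvw : pathPred P v = pathPred P w) : v = w := by
  by_cases hv : ∃ u i, [u, v] <:+: P i <;> by_cases hw : ∃ u i, [u, w] <:+: P i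
  · obtain ⟨i, hi⟩ := exists_pair_infix_pathPred hv
    obtain ⟨j, hj⟩ := exists_pair_infix_pathPred hw
    rw [hvw] at hi
    obtain rfl : i = j := hdisj i j (pathPred P w) (hi.subset (by simp)) (hj.subset (by simp))
    exact ((hP i).pairwise_lt hE).eq_of_pair_infix hi hj
  · exact absurd hvw (pathPred_ne hP hwR hv hw)
  · exact absurd hvw.symm (pathPred_ne hP hvR hw hv)
  · rwa [pathPred_of_not_exists hv, pathPred_of_not_exists hw] at hvw

theorem exists_matching_of_disjoint_paths [LinearOrder V] [Fintype V] (hE : ∀ u v, E u v → u < v)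
    (hRS : #R = #S) (hP : ∀ i, IsPath E (P i) (r i) (s i))
    (hdisj : ∀ i j v, v ∈ P i → v ∈ P j → i = j) :
    ∃ g : {v // v ∉ R} ≃ {v // v ∉ S}, ∀ v, (g v : V) = v ∨ E (g v) v := by
  let g : {v // v ∉ R} → {v // v ∉ S} := fun v => ⟨pathPred P v, pathPred_notMem hE hP hdisj v.2⟩
  have hg : Function.Injective g := fun v w h =>
    Subtype.ext (pathPred_injOn hE hP hdisj v.2 w.2 (congrArg Subtype.val h))
  have hcard : Fintype.card {v // v ∉ R} = Fintype.card {v // v ∉ S} := by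
    simp [Fintype.card_subtype_compl, hRS]
  exact ⟨.ofBijective g ((Fintype.bijective_iff_injective_and_card g).mpr ⟨hg, hcard⟩),
    fun v => pathPred_eq_or_rel hP v⟩

end DisjointPaths

section Matching

variable {V ι : Type*} [LinearOrder V] {E : V → V → Prop} {R S : Finset V}
  (g : {v // v ∉ R} ≃ {v // v ∉ S})

noncomputable def matchingNext (v : V) : V :=
  if h : v ∈ S then v else g.symm ⟨v, h⟩

variable {g}

theorem matchingNext_notMem {v : V} (hv : v ∉ S) : matchingNext g v ∉ R := by
  simpa [matchingNext, hv] using (g.symm ⟨v, hv⟩).2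

theorem matchingNext_injOn {v w : V} (hv : v ∉ S) (hw : w ∉ S)
    (h : matchingNext g v = matchingNext g w) : v = w := by
  simp only [matchingNext, hv, hw, dite_false] at h
  simpa using g.symm.injective (Subtype.ext h)

theorem eq_or_rel_matchingNext (hg : ∀ v, (g v : V) = v ∨ E (g v) v) {v : V} (hv : v ∉ S) :
    v = matchingNext g v ∨ E v (matchingNext g v) := by
  simpa [matchingNext, hv] using hg (g.symm ⟨v, hv⟩)

theorem matchingNext_ne_self {v : V} (hv : v ∈ R ∨ ∃ u, u ∉ S ∧ matchingNext g u = v ∧ u ≠ v)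
    (hvS : v ∉ S) : matchingNext g v ≠ v := by
  intro hfix
  rcases hv with hvR | ⟨u, huS, rfl, hu⟩
  · exact matchingNext_notMem hvS (hfix.symm ▸ hvR)
  · exact hu (matchingNext_injOn huS hvS hfix.symm)

theorem exists_disjoint_paths_of_matching [Fintype V] (hE : ∀ u v, E u v → u < v)
    (r : ι ≃ R) (s : ι ≃ S) (hg : ∀ v, (g v : V) = v ∨ E (g v) v) :
    ∃ τ : Equiv.Perm ι, ∃ P : ι → List V,
      (∀ i, IsPath E (P i) (r i) (s (τ i))) ∧ ∀ i j v, v ∈ P i → v ∈ P j → i = j := by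
  have : Finite ι := .of_equiv _ r.symm
  -- a vertex reached from `R` is not a fixed point of `matchingNext g`, so each step is an edge
  let Reached : V → Prop := fun v => v ∈ R ∨ ∃ u, u ∉ S ∧ matchingNext g u = v ∧ u ≠ v
  have hstep : ∀ v, Reached v → v ∉ S → E v (matchingNext g v) ∧ Reached (matchingNext g v) :=
    fun v hv hvS =>
      ⟨(eq_or_rel_matchingNext hg hvS).resolve_left (matchingNext_ne_self hv hvS).symm,
        .inr ⟨v, hvS, rfl, (matchingNext_ne_self hv hvS).symm⟩⟩
  let P : ι → List V := fun i => walkUntil (· ∈ S) (matchingNext g) (Fintype.card V) (r i)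
  have hP : ∀ i, (P i).IsChain E ∧ ∀ x ∈ P i, Reached x := fun i =>
    isChain_walkUntil hstep _ (.inl (r i).2)
  let last : ι → V := fun i => (P i).getLast (walkUntil_ne_nil _ _)
  have hlast : ∀ i, last i ∈ S := fun i => getLast_walkUntil_card ((hP i).1.imp hE)
  have hdisj : ∀ i j v, v ∈ P i → v ∈ P j → i = j := fun i j v =>
    eq_of_mem_walkUntil_of_mem_walkUntil (a := fun i => (r i : V))
      (fun i j h => r.injective (Subtype.ext h))
      (fun x i hx h => matchingNext_notMem hx (by rw [h]; exact (r i).2))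
      (fun x y => matchingNext_injOn) (fun i x hx hxS => hE _ _ (hstep x ((hP i).2 x hx) hxS).1) v
  let t : ι → ι := fun i => s.symm ⟨last i, hlast i⟩
  have ht : Function.Injective t := fun i j h => by
    have hij : last i = last j := by simpa [t] using congrArg (s · : ι → V) h
    have last_mem : ∀ k, last k ∈ P k := fun k => List.getLast_mem _
    exact hdisj i j _ (last_mem i) (hij ▸ last_mem j)
  refine ⟨.ofBijective t (Finite.injective_iff_bijective.mp ht), P,
    fun i => ⟨head?_walkUntil _ _, ?_, (hP i).1⟩, hdisj⟩
  simpa [t, last] using List.getLast?_eq_some_getLast (walkUntil_ne_nil _ _)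

theorem exists_disjoint_paths_iff_exists_matching [Fintype V] (hE : ∀ u v, E u v → u < v)
    (hRS : #R = #S) (r : ι ≃ R) (s : ι ≃ S) :
    (∃ τ : Equiv.Perm ι, ∃ P : ι → List V,
      (∀ i, IsPath E (P i) (r i) (s (τ i))) ∧ Pairwise fun i j => ∀ v ∈ P i, v ∉ P j) ↔
    ∃ g : {v // v ∉ R} ≃ {v // v ∉ S}, ∀ v, (g v : V) = v ∨ E (g v) v := by
  constructor
  · rintro ⟨τ, P, hP, hdisj⟩
    exact exists_matching_of_disjoint_paths (s := τ.trans s) hE hRS hP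
      fun i j v hi hj => by_contra fun hij => hdisj hij v hi hj
  · rintro ⟨g, hg⟩
    obtain ⟨τ, P, hP, hdisj⟩ := exists_disjoint_paths_of_matching hE r s hg
    exact ⟨τ, P, hP, fun i j hij v hi hj => hij (hdisj i j v hi hj)⟩

end Matching

theorem Equiv.exists_perm_iff_exists_equiv {ι α β : Type*} (σ : ι ≃ α) (ρ : ι ≃ β)
    (Q : α → β → Prop) :
    (∃ π : Equiv.Perm ι, ∀ j, Q (σ (π j)) (ρ j)) ↔ ∃ g : β ≃ α, ∀ b, Q (g b) b := by
  constructor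
  · rintro ⟨π, hπ⟩
    exact ⟨ρ.symm.trans (π.trans σ), fun b => by simpa using hπ (ρ.symm b)⟩
  · rintro ⟨g, hg⟩
    exact ⟨(ρ.trans g).trans σ.symm, fun j => by simpa using hg (ρ j)⟩

theorem det_submatrix_compl_one_sub_edgeMatrix_ne_zero_iff {V K : Type*} [LinearOrder V]
    [Fintype V] [DecidableEq V] {E : V → V → Prop} [DecidableRel E] [CommRing K] [Nontrivial K]
    (hirr : ∀ v, ¬E v v) {R S : Finset V} {l : ℕ} (hS : #Sᶜ = l) (hR : #Rᶜ = l) :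
    ((1 - edgeMatrix E K).submatrix (Sᶜ.orderEmbOfFin hS) (Rᶜ.orderEmbOfFin hR)).det ≠ 0 ↔
      ∃ g : {v // v ∉ R} ≃ {v // v ∉ S}, ∀ v, (g v : V) = v ∨ E (g v) v := by
  rw [det_submatrix_one_sub_edgeMatrix_ne_zero_iff hirr (Sᶜ.orderEmbOfFin hS).injective
    (Rᶜ.orderEmbOfFin hR).injective]
  exact Equiv.exists_perm_iff_exists_equiv
    ((Sᶜ.orderIsoOfFin hS).toEquiv.trans (Equiv.subtypeEquivRight fun _ => mem_compl))
    ((Rᶜ.orderIsoOfFin hR).toEquiv.trans (Equiv.subtypeEquivRight fun _ => mem_compl))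
    (fun a b => (a : V) = b ∨ E a b)

theorem subdet_nonsing_inv_eq_zero_iff {m : ℕ} {K : Type*} [CommRing K]
    {A : Matrix (Fin m) (Fin m) K} (hA : IsUnit A.det) {R S : Finset (Fin m)} (hRS : #R = #S)
    (hc : #Sᶜ = #Rᶜ) :
    subdet A⁻¹ R S = 0 ↔ (A.submatrix (Sᶜ.orderEmbOfFin hc) (Rᶜ.orderEmbOfFin rfl)).det = 0 := by
  let eR := finSumEquivOfFinset (s := R) rfl rfl
  let eS := finSumEquivOfFinset (s := S) hRS.symm hc
  have hunit : IsUnit (A.submatrix eS eR).det :=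
    (isUnit_iff_isUnit_det _).mp
      ((isUnit_submatrix_equiv eS eR).mpr ((isUnit_iff_isUnit_det A).mpr hA))
  rw [subdet, dif_pos hRS, ← hunit.mul_right_eq_zero]
  exact Iff.of_eq (congrArg (· = 0) (det_submatrix_mul_det_nonsing_inv_submatrix hA eR eS))

/-- **Vanishing criterion from the Gessel–Viennot–Lindström lemma.** For a DAG on
`[m]` with edge indeterminates and `Λ = I - L`, the minor `det (Λ⁻¹)_{R,S}` is
identically zero iff every system of `ℓ = #R = #S` directed paths from `R` to `S`
contains two paths that share a vertex. -/
theorem stmt5 (m : ℕ) (E : Fin m → Fin m → Prop) [DecidableRel E]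
    (hE : ∀ i j : Fin m, E i j → i < j) (R S : Finset (Fin m))
    (hRS : R.card = S.card) :
    subdet ((1 - Matrix.of (fun a b =>
        if E a b then (X (a, b) : MvPolynomial (Fin m × Fin m) ℝ) else 0))⁻¹) R S = 0
    ↔ ∀ (τ : Equiv.Perm (Fin R.card)) (P : Fin R.card → List (Fin m)),
        (∀ i, IsPath E (P i) ((R.orderIsoOfFin rfl) i).1
          ((S.orderIsoOfFin hRS.symm) (τ i)).1) →
        ∃ i j, i ≠ j ∧ ∃ v, v ∈ P i ∧ v ∈ P j := by
  have hc : #Sᶜ = #Rᶜ := by simp [card_compl, hRS]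
  change subdet (1 - edgeMatrix E ℝ)⁻¹ R S = 0 ↔ _
  rw [subdet_nonsing_inv_eq_zero_iff (by rw [det_one_sub_edgeMatrix hE]; exact isUnit_one) hRS hc,
    ← not_iff_not, ← ne_eq,
    det_submatrix_compl_one_sub_edgeMatrix_ne_zero_iff (fun v h => (hE v v h).false) hc rfl,
    ← exists_disjoint_paths_iff_exists_matching hE hRS (R.orderIsoOfFin rfl).toEquiv
      (S.orderIsoOfFin hRS.symm).toEquiv]
  simp only [not_forall, not_exists, not_and, exists_prop]
  rfl
end

section
/- Let $G$ be a DAG. A set $C$ d-separates disjoint sets $A$ and $B$ in $G$ if and only if there is a partition $C = C_A \cup C_B$ such that $(C_A, C_B)$ trek-separates $A\cup C$ from $B\cup C$. -/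
/-- `(C_A, C_B)` trek-separates `A` from `B`. -/
def TSep {V : Type*} (E : V → V → Prop) (A B CA CB : Finset V) : Prop :=
  ∀ a ∈ A, ∀ b ∈ B, ∀ P₁ P₂ : List V,
    (∃ k, IsPath E P₁ k a ∧ IsPath E P₂ k b) →
    (∃ v ∈ CA, v ∈ P₁) ∨ (∃ v ∈ CB, v ∈ P₂)

/-- The vertex at position `t` of the (undirected) path `p` is a collider: both
adjacent path edges point into it. -/
def IsColliderAt {V : Type*} (E : V → V → Prop) (p : List V) (t : ℕ) : Prop :=
  1 ≤ t ∧ ∃ x y z, p[t - 1]? = some x ∧ p[t]? = some y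
    ∧ p[t + 1]? = some z ∧ E x y ∧ E z y

/-- `C` d-separates `A` and `B`: every (undirected) path in `G` from `A` to `B`
contains a non-collider belonging to `C`, or a collider that is not in `C` and has
no descendant in `C`. -/
def DSep {m : ℕ} (E : Fin m → Fin m → Prop) (A B C : Finset (Fin m)) : Prop :=
  ∀ p : List (Fin m), ∀ a ∈ A, ∀ b ∈ B,
    p.head? = some a → p.getLast? = some b → p.Chain' (fun x y => E x y ∨ E y x) →
    ∃ t : ℕ, ∃ v : Fin m, p[t]? = some v ∧
      ((¬ IsColliderAt E p t ∧ v ∈ C)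
        ∨ (IsColliderAt E p t ∧ v ∉ C ∧ ∀ d ∈ C, ¬ ∃ q : List (Fin m), IsPath E q v d))

variable {V : Type*} {E : V → V → Prop} {C : Finset V}

section Paths

theorem isPath_singleton_iff {u v w : V} : IsPath E [u] v w ↔ v = u ∧ w = u := by
  simp [IsPath, eq_comm]
  exact fun _ _ => List.isChain_singleton u

theorem IsPath.singleton (v : V) : IsPath E [v] v v :=
  isPath_singleton_iff.2 ⟨rfl, rfl⟩

theorem isPath_cons_cons {a b u v : V} {T : List V} :
    IsPath E (a :: b :: T) u v ↔ u = a ∧ E a b ∧ IsPath E (b :: T) b v := by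
  unfold IsPath
  rw [List.Chain', List.Chain', List.isChain_cons_cons]
  simp [List.getLast?_cons, eq_comm, and_left_comm]

theorem IsPath.ne_nil {P : List V} {u v : V} (h : IsPath E P u v) : P ≠ [] := by
  rintro rfl
  simp [IsPath] at h

theorem IsPath.head_mem {P : List V} {u v : V} (h : IsPath E P u v) : u ∈ P :=
  List.mem_of_mem_head? h.1

theorem IsPath.getLast_mem {P : List V} {u v : V} (h : IsPath E P u v) : v ∈ P :=
  List.mem_of_mem_getLast? h.2.1

theorem IsPath.cons {P : List V} {u v w : V} (huv : E u v) (h : IsPath E P v w) :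
    IsPath E (u :: P) u w := by
  obtain ⟨P, rfl⟩ := List.head?_eq_some_iff.1 h.1
  exact isPath_cons_cons.2 ⟨rfl, huv, h⟩

theorem IsPath.append_tail {P Q : List V} {u v w : V} (hP : IsPath E P u v)
    (hQ : IsPath E Q v w) : IsPath E (P ++ Q.tail) u w := by
  obtain ⟨Q, rfl⟩ := List.head?_eq_some_iff.1 hQ.1
  obtain ⟨P, rfl⟩ := List.getLast?_eq_some_iff.1 hP.2.1
  obtain ⟨hPh, -, hPc⟩ := hP
  obtain ⟨-, hQl, hQc⟩ := hQ
  refine ⟨by simpa using hPh, by simpa [List.getLast?_cons] using hQl, ?_⟩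
  rw [List.tail_cons, List.append_assoc, List.singleton_append]
  exact List.isChain_split.2 ⟨hPc, hQc⟩

theorem IsPath.concat {P : List V} {u v w : V} (hP : IsPath E P u v) (hvw : E v w) :
    IsPath E (P ++ [w]) u w :=
  hP.append_tail ((IsPath.singleton w).cons hvw)

theorem IsPath.mem_dropLast_or_eq {P : List V} {u v x : V} (h : IsPath E P u v) (hx : x ∈ P) :
    x ∈ P.dropLast ∨ x = v := by
  obtain ⟨P, rfl⟩ := List.getLast?_eq_some_iff.1 h.2.1
  simpa using hx

theorem IsPath.exists_edge_into_first_mem :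
    ∀ {P : List V} {u v : V}, IsPath E P u v → u ∉ C → (∃ x ∈ P, x ∈ C) →
      ∃ T z c, IsPath E T u z ∧ (∀ x ∈ T, x ∉ C) ∧ E z c ∧ c ∈ C ∧ c ∈ P
  | [], _, _, h, _, _ => absurd rfl h.ne_nil
  | [a], u, v, h, hu, ⟨x, hx, hxC⟩ => by
    obtain ⟨rfl, -⟩ := isPath_singleton_iff.1 h
    exact absurd (List.mem_singleton.1 hx ▸ hxC) hu
  | a :: b :: P, u, v, h, hu, ⟨x, hx, hxC⟩ => by
    obtain ⟨rfl, hab, hb⟩ := isPath_cons_cons.1 h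
    by_cases hbC : b ∈ C
    · exact ⟨[u], u, b, .singleton u, by simpa using hu, hab, hbC, by simp⟩
    · have hx' : ∃ x ∈ b :: P, x ∈ C := by
        rcases List.mem_cons.1 hx with rfl | hx
        · exact absurd hxC hu
        · exact ⟨x, hx, hxC⟩
      obtain ⟨T, z, c, hT, hTC, hzc, hc, hcP⟩ := hb.exists_edge_into_first_mem hbC hx'
      exact ⟨u :: T, z, c, hT.cons hab, by simpa [hu] using hTC, hzc, hc,
        List.mem_cons_of_mem _ hcP⟩

theorem exists_isPath_to_first_mem {v : V} (h : ∃ c ∈ C, ∃ q, IsPath E q v c) :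
    ∃ D d, IsPath E D v d ∧ d ∈ C ∧ ∀ x ∈ D, x ∈ C → x = d := by
  obtain ⟨c, hc, q, hq⟩ := h
  by_cases hv : v ∈ C
  · exact ⟨[v], v, .singleton v, hv, by simp⟩
  · obtain ⟨T, z, d, hT, hTC, hzd, hd, -⟩ :=
      hq.exists_edge_into_first_mem hv ⟨c, hq.getLast_mem, hc⟩
    refine ⟨T ++ [d], d, hT.concat hzd, hd, fun x hx hxC => ?_⟩
    rcases List.mem_append.1 hx with hx | hx
    · exact absurd hxC (hTC x hx)
    · exact List.mem_singleton.1 hx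

end Paths

section DConnecting

theorem not_isColliderAt_zero (p : List V) : ¬ IsColliderAt E p 0 :=
  fun h => absurd h.1 (by decide)

theorem isColliderAt_cons_succ (u : V) (l : List V) {t : ℕ} (ht : 0 < t) :
    IsColliderAt E (u :: l) (t + 1) ↔ IsColliderAt E l t := by
  obtain ⟨s, rfl⟩ := Nat.exists_eq_add_one_of_ne_zero ht.ne'
  simp [IsColliderAt]

theorem isColliderAt_one (u v w : V) (l : List V) :
    IsColliderAt E (u :: v :: w :: l) 1 ↔ E u v ∧ E w v := by
  simp [IsColliderAt]

theorem not_isColliderAt_one (u v : V) : ¬ IsColliderAt E [u, v] 1 := by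
  simp [IsColliderAt]

/-- `col` is the collider status of `v` on the walk. -/
def IsOpenVertex (E : V → V → Prop) (C : Finset V) (col : Prop) (v : V) : Prop :=
  (col → ∃ c ∈ C, ∃ q, IsPath E q v c) ∧ (¬ col → v ∉ C)

theorem not_blocks_iff {col : Prop} {v : V} :
    ¬ ((¬ col ∧ v ∈ C) ∨ (col ∧ v ∉ C ∧ ∀ d ∈ C, ¬ ∃ q, IsPath E q v d)) ↔
      IsOpenVertex E C col v := by
  constructor
  · refine fun h => ⟨fun hc => ?_, fun hc hv => h (.inl ⟨hc, hv⟩)⟩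
    by_cases hv : v ∈ C
    · exact ⟨v, hv, [v], .singleton v⟩
    · by_contra! hno
      exact h (.inr ⟨hc, hv, fun d hd ⟨q, hq⟩ => hno d hd q hq⟩)
  · rintro ⟨hcol, hncol⟩ (⟨hc, hv⟩ | ⟨hc, -, hno⟩)
    · exact hncol hc hv
    · obtain ⟨d, hd, q, hq⟩ := hcol hc
      exact hno d hd ⟨q, hq⟩

/-- No vertex of the walk `w` blocks it given `C`. The flag `entered` says whether the first
vertex of `w` is entered by an arrow from the vertex preceding `w` (`False` for a whole walk,
whose endpoints are non-colliders). -/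
def IsDConnecting (E : V → V → Prop) (C : Finset V) (entered : Prop) : List V → Prop
  | [] => True
  | [v] => v ∉ C
  | v :: w :: rest => (E v w ∨ E w v) ∧ IsOpenVertex E C (entered ∧ E w v) v
      ∧ IsDConnecting E C (E v w) (w :: rest)

theorem IsDConnecting.head_notMem {P : Prop} {v : V} {rest : List V}
    (h : IsDConnecting E C P (v :: rest)) (hP : ¬ P) : v ∉ C := by
  cases rest with
  | nil => exact h
  | cons w rest => exact h.2.1.2 fun h' => hP h'.1

theorem isDConnecting_edge_iff (u v : V) (rest : List V) :
    IsDConnecting E C (E u v) (v :: rest) ↔ (v :: rest).IsChain (fun x y => E x y ∨ E y x) ∧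
      ∀ t x, (u :: v :: rest)[t + 1]? = some x →
        IsOpenVertex E C (IsColliderAt E (u :: v :: rest) (t + 1)) x := by
  induction rest generalizing u v with
  | nil =>
    refine ⟨fun hv => ⟨List.isChain_singleton v, ?_⟩, fun h => ?_⟩
    · rintro (_ | t) x hx
      · obtain rfl : v = x := by simpa using hx
        exact ⟨fun h => absurd h (not_isColliderAt_one u v), fun _ => hv⟩
      · simp at hx
    · exact (h.2 0 v rfl).2 (not_isColliderAt_one u v)
  | cons w rest ih =>
    rw [IsDConnecting, ih, List.isChain_cons_cons]
    constructor
    · rintro ⟨hvw, hv, hchain, hrest⟩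
      refine ⟨⟨hvw, hchain⟩, ?_⟩
      rintro (_ | t) x hx
      · obtain rfl : v = x := by simpa using hx
        rwa [isColliderAt_one]
      · rw [isColliderAt_cons_succ _ _ t.succ_pos]
        exact hrest t x hx
    · rintro ⟨⟨hvw, hchain⟩, h⟩
      refine ⟨hvw, ?_, hchain, fun t x hx => ?_⟩
      · simpa [isColliderAt_one] using h 0 v rfl
      · simpa [isColliderAt_cons_succ _ _ t.succ_pos] using h (t + 1) x hx

theorem isDConnecting_false_iff (p : List V) :
    IsDConnecting E C False p ↔ p.IsChain (fun x y => E x y ∨ E y x) ∧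
      ∀ t x, p[t]? = some x → IsOpenVertex E C (IsColliderAt E p t) x := by
  have head : ∀ {v : V} {l : List V}, IsOpenVertex E C (IsColliderAt E (v :: l) 0) v ↔ v ∉ C :=
    by simp [IsOpenVertex, not_isColliderAt_zero]
  match p with
  | [] => simp [IsDConnecting]
  | [v] =>
    refine ⟨fun hv => ⟨List.isChain_singleton v, ?_⟩, fun h => head.1 (h.2 0 v rfl)⟩
    rintro (_ | t) x hx
    · obtain rfl : v = x := by simpa using hx
      exact head.2 hv
    · simp at hx
  | v :: w :: rest =>
    rw [IsDConnecting, isDConnecting_edge_iff, List.isChain_cons_cons]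
    constructor
    · rintro ⟨hvw, hv, hchain, hrest⟩
      refine ⟨⟨hvw, hchain⟩, ?_⟩
      rintro (_ | t) x hx
      · obtain rfl : v = x := by simpa using hx
        exact head.2 (hv.2 (by simp))
      · exact hrest t x hx
    · rintro ⟨⟨hvw, hchain⟩, h⟩
      exact ⟨hvw, ⟨by simp, fun _ => head.1 (h 0 v rfl)⟩, hchain, fun t x hx => h (t + 1) x hx⟩

theorem dSep_iff {m : ℕ} {E : Fin m → Fin m → Prop} {A B C : Finset (Fin m)} :
    DSep E A B C ↔ ∀ p, ∀ a ∈ A, ∀ b ∈ B, p.head? = some a → p.getLast? = some b →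
      ¬ IsDConnecting E C False p := by
  unfold DSep
  simp only [isDConnecting_false_iff, ← not_blocks_iff, not_and, not_forall, not_not, exists_prop]
  rfl

end DConnecting

section Backward

variable {X Y CA CB : Finset V}

theorem TSep.mem_or_mem (hT : TSep E X Y CA CB) (hCA : CA ⊆ C) (hCB : CB ⊆ C)
    {L R : List V} {k x y : V} (hL : IsPath E L k x) (hR : IsPath E R k y) (hx : x ∈ X)
    (hy : y ∈ Y) (hLC : ∀ u ∈ L, u ∈ C → u = x) (hRC : ∀ u ∈ R, u ∈ C → u = y) :
    x ∈ CA ∨ y ∈ CB := by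
  rcases hT x hx y hy L R ⟨k, hL, hR⟩ with ⟨u, hu, huL⟩ | ⟨u, hu, huR⟩
  · exact .inl (hLC u huL (hCA hu) ▸ hu)
  · exact .inr (hRC u huR (hCB hu) ▸ hu)

theorem TSep.exists_first_descendant_notMem (hT : TSep E X Y CA CB) (hCA : CA ⊆ C)
    (hCB : CB ⊆ C) (hdisj : Disjoint CA CB) (hCX : C ⊆ X) (hCY : C ⊆ Y)
    {L R : List V} {k c v : V} (hL : IsPath E L k c) (hLC : ∀ u ∈ L, u ∈ C → u = c)
    (hcX : c ∈ X) (hcA : c ∉ CA) (hR : IsPath E R k v) (hRC : ∀ u ∈ R.dropLast, u ∉ C)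
    (hv : ∃ d ∈ C, ∃ q, IsPath E q v d) :
    ∃ D d, IsPath E D v d ∧ (∀ u ∈ D, u ∈ C → u = d) ∧ d ∈ X ∧ d ∉ CA := by
  obtain ⟨D, d, hD, hd, hDC⟩ := exists_isPath_to_first_mem hv
  refine ⟨D, d, hD, hDC, hCX hd, fun hdA => ?_⟩
  have hRDC : ∀ u ∈ R ++ D.tail, u ∈ C → u = d := by
    intro u hu huC
    rcases List.mem_append.1 hu with hu | hu
    · rcases hR.mem_dropLast_or_eq hu with hu | rfl
      exacts [absurd huC (hRC u hu), hDC u hD.head_mem huC]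
    · exact hDC u (List.mem_of_mem_tail hu) huC
  rcases hT.mem_or_mem hCA hCB hL (hR.append_tail hD) hcX (hCY hd) hLC hRDC with h | h
  exacts [hcA h, Finset.disjoint_left.1 hdisj hdA h]

/-- The invariant for following a d-connecting walk `v :: rest`: a trek with top `k` whose left
side `L` meets `C` at most in its end `c ∉ C_A`, and whose right side `R` ends in `v`, with
`R = [v]` unless `v` is entered by an arrow. At a collider, its first descendant in `C` takes
over the role of `c`; at the end of the walk trek separation fails. -/
theorem TSep.false_of_isDConnecting (hE : ∀ x y, E x y → ¬ E y x)
    (hT : TSep E X Y CA CB) (hCA : CA ⊆ C) (hCB : CB ⊆ C) (hdisj : Disjoint CA CB)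
    (hCX : C ⊆ X) (hCY : C ⊆ Y) :
    ∀ (rest : List V) {P : Prop} {v k c : V} {L R : List V},
      IsPath E L k c → (∀ u ∈ L, u ∈ C → u = c) → c ∈ X → c ∉ CA →
      IsPath E R k v → (∀ u ∈ R.dropLast, u ∉ C) → (¬ P → R = [v]) →
      IsDConnecting E C P (v :: rest) → (∃ y ∈ Y, (v :: rest).getLast? = some y) → False
  | [], _, v, _, _, _, _, hL, hLC, hcX, hcA, hR, hRC, _, hv, ⟨y, hy, hvy⟩ => by
    obtain rfl : v = y := by simpa using hvy
    have hRC' : ∀ u ∈ _, u ∈ C → u = v := fun u hu huC =>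
      (hR.mem_dropLast_or_eq hu).resolve_left fun h => hRC u h huC
    rcases hT.mem_or_mem hCA hCB hL hR hcX hy hLC hRC' with h | h
    exacts [hcA h, hv (hCB h)]
  | w :: rest, P, v, k, c, L, R, hL, hLC, hcX, hcA, hR, hRC, hPR, ⟨hvw, hv, hrest⟩, hlast => by
    have hlast' : ∃ y ∈ Y, (w :: rest).getLast? = some y := by simpa using hlast
    rcases hvw with hvw | hwv
    · have hvC : v ∉ C := hv.2 fun h => hE _ _ hvw h.2
      refine hT.false_of_isDConnecting hE hCA hCB hdisj hCX hCY rest hL hLC hcX hcA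
        (hR.concat hvw) (fun u hu => ?_) (fun h => absurd hvw h) hrest hlast'
      rw [List.dropLast_concat] at hu
      rcases hR.mem_dropLast_or_eq hu with hu | rfl
      exacts [hRC u hu, hvC]
    · obtain ⟨D, d, hD, hDC, hdX, hdA⟩ :
          ∃ D d, IsPath E D v d ∧ (∀ u ∈ D, u ∈ C → u = d) ∧ d ∈ X ∧ d ∉ CA := by
        by_cases hP : P
        · exact hT.exists_first_descendant_notMem hCA hCB hdisj hCX hCY hL hLC hcX hcA hR hRC
            (hv.1 ⟨hP, hwv⟩)
        · obtain rfl := hPR hP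
          obtain ⟨rfl, -⟩ := isPath_singleton_iff.1 hR
          exact ⟨L, c, hL, hLC, hcX, hcA⟩
      have hwC : w ∉ C := hrest.head_notMem (hE _ _ hwv)
      refine hT.false_of_isDConnecting hE hCA hCB hdisj hCX hCY rest (hD.cons hwv)
        (fun u hu huC => ?_) hdX hdA (.singleton w) (by simp) (fun _ => rfl) hrest hlast'
      rcases List.mem_cons.1 hu with rfl | hu
      exacts [absurd huC hwC, hDC u hu huC]

theorem dSep_of_tSep {m : ℕ} {E : Fin m → Fin m → Prop} (hE : ∀ x y, E x y → ¬ E y x)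
    {A B C CA CB : Finset (Fin m)} (hdisj : Disjoint CA CB) (hun : CA ∪ CB = C)
    (hT : TSep E (A ∪ C) (B ∪ C) CA CB) : DSep E A B C := by
  have hCA : CA ⊆ C := hun ▸ Finset.subset_union_left
  have hCB : CB ⊆ C := hun ▸ Finset.subset_union_right
  refine dSep_iff.2 fun p a ha b hb hpa hpb hp => ?_
  obtain ⟨rest, rfl⟩ := List.head?_eq_some_iff.1 hpa
  have haC : a ∉ C := hp.head_notMem id
  exact hT.false_of_isDConnecting hE hCA hCB hdisj Finset.subset_union_right
    Finset.subset_union_right rest (.singleton a) (by simp [haC]) (Finset.mem_union_left _ ha)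
    (fun h => haC (hCA h)) (.singleton a) (by simp) (fun _ => rfl) hp
    ⟨b, Finset.mem_union_left _ hb, hpb⟩

end Backward

section Forward

variable {B : Finset V}

theorem IsPath.getLast?_reverse_append {T : List V} {k u : V} (hT : IsPath E T k u)
    (W : List V) : (T.reverse ++ W).getLast? = (k :: W).getLast? := by
  simp [List.getLast?_append, hT.1, List.getLast?_cons]

theorem IsPath.isDConnecting_reverse_append (hE : ∀ x y, E x y → ¬ E y x) :
    ∀ {T : List V} {l x : V} {rest : List V}, IsPath E T l x → (∀ u ∈ T, u ∉ C) →
      IsDConnecting E C False (l :: rest) → IsDConnecting E C False (T.reverse ++ rest)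
  | [], _, _, _, hT, _, _ => absurd rfl hT.ne_nil
  | [a], l, x, rest, hT, _, h => by
    obtain ⟨rfl, -⟩ := isPath_singleton_iff.1 hT
    simpa using h
  | a :: b :: T, l, x, rest, hT, hTC, h => by
    obtain ⟨rfl, hab, hb⟩ := isPath_cons_cons.1 hT
    have hb' : IsDConnecting E C False (b :: l :: rest) :=
      ⟨.inr hab, ⟨fun h => h.1.elim, fun _ => hTC b (by simp)⟩, by simpa [hE _ _ hab] using h⟩
    simpa using hb.isDConnecting_reverse_append hE (fun u hu => hTC u (by simp [hu])) hb'

theorem IsPath.isDConnecting_append (hE : ∀ x y, E x y → ¬ E y x) {z : V} {W : List V}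
    (hW : ∀ y ∈ W.head?, E z y ∧ IsDConnecting E C True W) :
    ∀ {T : List V} {l : V}, IsPath E T l z → (∀ u ∈ T, u ∉ C) →
      ∀ P, IsDConnecting E C P (T ++ W)
  | [], _, hT, _, _ => absurd rfl hT.ne_nil
  | [a], l, hT, hTC, P => by
    obtain ⟨rfl, rfl⟩ := isPath_singleton_iff.1 hT
    match W, hW with
    | [], _ => simpa [IsDConnecting] using hTC
    | y :: W, hW =>
      obtain ⟨hzy, hyW⟩ := hW y rfl
      exact ⟨.inl hzy, ⟨fun h => (hE _ _ hzy h.2).elim, fun _ => by simpa using hTC⟩,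
        by simpa [hzy] using hyW⟩
  | a :: b :: T, l, hT, hTC, P => by
    obtain ⟨rfl, hab, hb⟩ := isPath_cons_cons.1 hT
    exact ⟨.inl hab, ⟨fun h => (hE _ _ hab h.2).elim, fun _ => hTC _ (by simp)⟩,
      hb.isDConnecting_append hE hW (fun u hu => hTC u (by simp [hu])) _⟩

/-- Some vertex of `B` is reached from `c` by a walk that is d-connecting given `C` once `c`
is entered by an arrow. -/
def DReaches (E : V → V → Prop) (C B : Finset V) (c : V) : Prop :=
  ∃ w, ∃ b ∈ B, (c :: w).getLast? = some b ∧ IsDConnecting E C True (c :: w)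

theorem IsPath.dReaches (hE : ∀ x y, E x y → ¬ E y x) {T W : List V} {k z c b : V}
    (hT : IsPath E T k z) (hTC : ∀ u ∈ T, u ∉ C) (hzc : E z c) (hc : c ∈ C) (hb : b ∈ B)
    (hWb : (k :: W).getLast? = some b) (hW : IsDConnecting E C False (k :: W)) :
    DReaches E C B c := by
  obtain ⟨U, hU⟩ := List.head?_eq_some_iff.1 (show (T.reverse ++ W).head? = some z by
    simp [List.head?_append, hT.2.1])
  have hTW := hT.isDConnecting_reverse_append hE hTC hW
  have hUb := hT.getLast?_reverse_append W
  rw [hU] at hTW hUb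
  refine ⟨z :: U, b, hb, by rwa [List.getLast?_cons_cons, hUb], ?_⟩
  exact ⟨.inr hzc, ⟨fun _ => ⟨c, hc, [c], .singleton c⟩, fun h => (h ⟨trivial, hzc⟩).elim⟩,
    by simpa [hE _ _ hzc] using hTW⟩

theorem IsPath.exists_isDConnecting_of_dReaches [DecidableEq V] (hE : ∀ x y, E x y → ¬ E y x)
    {P : List V} {k y : V} (hP : IsPath E P k y) (hk : k ∉ C) (hy : y ∈ B ∪ C)
    (hreach : ∀ c ∈ P, c ∈ C → DReaches E C B c) :
    ∃ W, ∃ b ∈ B, (k :: W).getLast? = some b ∧ IsDConnecting E C False (k :: W) := by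
  by_cases hmeet : ∃ u ∈ P, u ∈ C
  · obtain ⟨T, z, c, hT, hTC, hzc, hc, hcP⟩ := hP.exists_edge_into_first_mem hk hmeet
    obtain ⟨w, b, hb, hwb, hw⟩ := hreach c hcP hc
    obtain ⟨T, rfl⟩ := List.head?_eq_some_iff.1 hT.1
    refine ⟨T ++ c :: w, b, hb, by simpa [List.getLast?_cons, List.getLast?_append] using hwb, ?_⟩
    exact hT.isDConnecting_append hE (by simpa using ⟨hzc, hw⟩) hTC False
  · simp only [not_exists, not_and] at hmeet
    obtain ⟨W, rfl⟩ := List.head?_eq_some_iff.1 hP.1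
    refine ⟨W, y, (Finset.mem_union.1 hy).resolve_right (hmeet y hP.getLast_mem), hP.2.1, ?_⟩
    simpa using hP.isDConnecting_append (W := []) hE (by simp) hmeet False

theorem exists_tSep_of_dSep {m : ℕ} {E : Fin m → Fin m → Prop} (hE : ∀ x y, E x y → ¬ E y x)
    {A B C : Finset (Fin m)} (hD : DSep E A B C) :
    ∃ CA CB : Finset (Fin m), Disjoint CA CB ∧ CA ∪ CB = C
      ∧ TSep E (A ∪ C) (B ∪ C) CA CB := by
  classical
  refine ⟨C.filter (DReaches E C B), C.filter (¬ DReaches E C B ·),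
    Finset.disjoint_filter_filter_not _ _ _, Finset.filter_union_filter_not_eq _ _, ?_⟩
  rintro x hx y hy P₁ P₂ ⟨k, hP₁, hP₂⟩
  by_contra! h
  have reach₁ : ∀ c ∈ P₁, c ∈ C → ¬ DReaches E C B c :=
    fun c hc hcC hr => h.1 c (Finset.mem_filter.2 ⟨hcC, hr⟩) hc
  have reach₂ : ∀ c ∈ P₂, c ∈ C → DReaches E C B c :=
    fun c hc hcC => by_contra fun hr => h.2 c (Finset.mem_filter.2 ⟨hcC, hr⟩) hc
  have hk : k ∉ C := fun hk => reach₁ k hP₁.head_mem hk (reach₂ k hP₂.head_mem hk)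
  obtain ⟨W, b, hb, hWb, hW⟩ := hP₂.exists_isDConnecting_of_dReaches hE hk hy reach₂
  by_cases hmeet : ∃ u ∈ P₁, u ∈ C
  · obtain ⟨T, z, c, hT, hTC, hzc, hc, hcP⟩ := hP₁.exists_edge_into_first_mem hk hmeet
    exact reach₁ c hcP hc (hT.dReaches hE hTC hzc hc hb hWb hW)
  · simp only [not_exists, not_and] at hmeet
    have hxA : x ∈ A := (Finset.mem_union.1 hx).resolve_right (hmeet x hP₁.getLast_mem)
    exact dSep_iff.1 hD _ x hxA b hb (by simp [List.head?_append, hP₁.2.1])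
      (by rw [hP₁.getLast?_reverse_append, hWb]) (hP₁.isDConnecting_reverse_append hE hmeet hW)

end Forward

theorem stmt11_general (m : ℕ) (E : Fin m → Fin m → Prop)
    (hE : ∀ i j : Fin m, E i j → i < j) (A B C : Finset (Fin m)) :
    DSep E A B C
    ↔ ∃ CA CB : Finset (Fin m), Disjoint CA CB ∧ CA ∪ CB = C
        ∧ TSep E (A ∪ C) (B ∪ C) CA CB := by
  have hasymm : ∀ i j, E i j → ¬ E j i := fun i j hij hji => lt_asymm (hE i j hij) (hE j i hji)
  exact ⟨exists_tSep_of_dSep hasymm, fun ⟨_, _, hdisj, hun, hT⟩ => dSep_of_tSep hasymm hdisj hun hT⟩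

/-- **d-separation is a special case of trek separation.** In a DAG `G`, a set `C`
d-separates disjoint sets `A` and `B` iff there is a partition `C = C_A ∪ C_B`
such that `(C_A, C_B)` trek-separates `A ∪ C` from `B ∪ C`. -/
theorem stmt11 (m : ℕ) (E : Fin m → Fin m → Prop)
    (hE : ∀ i j : Fin m, E i j → i < j) (A B C : Finset (Fin m))
    (hAB : Disjoint A B) :
    DSep E A B C
    ↔ ∃ CA CB : Finset (Fin m), Disjoint CA CB ∧ CA ∪ CB = C
        ∧ TSep E (A ∪ C) (B ∪ C) CA CB :=
  stmt11_general m E hE A B C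
end
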